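/- arXiv:2204.04909 — 7 statements merged into one kernel-verified Lean document; each statement's English description precedes it below -/
import Mathlib

section
/- Let $k \in \{1,\ldots,n\}$ and let $x \in \mathbf{R}^n$ be such that the elementary symmetric polynomials satisfy $S_1(x) \ge 0, \ldots, S_k(x) \ge 0$. Then for all $1 \le i \le j \le k$, one has $\left(\frac{S_i(x)}{\binom{n}{i}}\right)^{1/i} \ge \left(\frac{S_j(x)}{\binom{n}{j}}\right)^{1/j}$ (the Maclaurin inequalities hold on the Gårding cone $\Gamma_k$, not just for vectors with positive entries). -/
/-!
Newton's inequalities `E_a E_(a+2) ≤ E_(a+1)²` for `E_m = S_m / (n choose m)` hold for every real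
vector. The roots of `∏ (X + x_i)` are real, hence by Rolle so are those of its derivatives, and
differentiating moves any three consecutive coefficients to the bottom. For the three lowest
coefficients the inequality reads `2d e_d e_(d-2) ≤ (d-1) e_(d-1)²` in the `d` roots, which follows
by induction on `d`. With `E_0 = 1` and `E_1, …, E_k > 0`, this log-concavity makes `E_m ^ (1/m)`
decreasing in `m`. On `Γ_k`, `S_m(x + ε)` is a polynomial in `ε` whose coefficients are positive
multiples of `S_0(x), …, S_m(x)`, so `x + ε` has `E_1, …, E_k > 0` for every `ε > 0`; let `ε → 0`.
-/

open Finset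

noncomputable def esymm (n m : ℕ) (x : Fin n → ℝ) : ℝ :=
  ∑ s ∈ Finset.powersetCard m (Finset.univ : Finset (Fin n)), ∏ t ∈ s, x t

open Polynomial

namespace Multiset

variable {R : Type*} [CommSemiring R]

theorem esymm_zero (s : Multiset R) : s.esymm 0 = 1 := by
  simp [esymm]

theorem esymm_eq_zero_of_card_lt (s : Multiset R) {k : ℕ} (hk : card s < k) : s.esymm k = 0 := by
  simp [esymm, powersetCard_eq_empty _ hk]

theorem esymm_cons_succ (a : R) (s : Multiset R) (k : ℕ) :
    (a ::ₘ s).esymm (k + 1) = s.esymm (k + 1) + a * s.esymm k := by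
  simp [esymm, powersetCard_cons, prod_cons, sum_map_mul_left]

theorem newton_inequality_top (s : Multiset ℝ) (m : ℕ) (hs : card s = m + 2) :
    2 * ((m : ℝ) + 2) * (s.esymm (m + 2) * s.esymm m) ≤ ((m : ℝ) + 1) * s.esymm (m + 1) ^ 2 := by
  induction s using Multiset.induction_on generalizing m with
  | empty => simp at hs
  | cons a t ih =>
    have ht : card t = m + 1 := by simpa using hs
    rw [esymm_cons_succ, esymm_cons_succ, esymm_eq_zero_of_card_lt t (by omega), zero_add]
    rcases m with _ | m
    · simp only [esymm_zero, CharP.cast_eq_zero, zero_add, mul_one]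
      nlinarith [sq_nonneg (t.esymm 1 - a)]
    · rw [esymm_cons_succ]
      have ih := ih m ht
      push_cast at ih ⊢
      refine le_of_mul_le_mul_left ?_ (by positivity : (0 : ℝ) < m + 2)
      nlinarith [mul_le_mul_of_nonneg_left ih (by positivity : (0 : ℝ) ≤ a ^ 2 * (m + 3)),
        sq_nonneg ((m + 2) * t.esymm (m + 2) - a * t.esymm (m + 1))]

end Multiset

namespace Polynomial

theorem Splits.derivative {p : ℝ[X]} (hp : p.Splits) : p.derivative.Splits := by
  rw [splits_iff_card_roots] at hp ⊢
  have h₁ := p.card_roots_le_derivative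
  have h₂ := p.derivative.card_roots'
  rw [natDegree_derivative] at h₂ ⊢
  omega

theorem Splits.newton_inequality_coeff_zero {p : ℝ[X]} (hp : p.Splits) (hd : 2 ≤ p.natDegree) :
    2 * (p.natDegree : ℝ) * (p.coeff 0 * p.coeff 2) ≤ (p.natDegree - 1 : ℝ) * p.coeff 1 ^ 2 := by
  obtain ⟨m, hm⟩ : ∃ m, p.natDegree = m + 2 := ⟨_, (Nat.sub_add_cancel hd).symm⟩
  have hcard : Multiset.card p.roots = m + 2 := hm ▸ hp.natDegree_eq_card_roots.symm
  have hcoeff (k : ℕ) (hk : k ≤ 2) :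
      p.coeff k = p.leadingCoeff * (-1) ^ (m + 2 - k) * p.roots.esymm (m + 2 - k) := by
    rw [coeff_eq_esymm_roots_of_splits hp (by omega), hm]
  rw [hcoeff 0 (by omega), hcoeff 1 (by omega), hcoeff 2 (by omega), hm]
  simp only [Nat.sub_zero, show m + 2 - 1 = m + 1 by omega, Nat.add_sub_cancel]
  have hsign : ((-1 : ℝ) ^ m) ^ 2 = 1 := by rw [← pow_mul, pow_mul']; simp
  have h := mul_le_mul_of_nonneg_left (p.roots.newton_inequality_top m hcard)
    (sq_nonneg p.leadingCoeff)
  push_cast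
  linear_combination h + (p.leadingCoeff ^ 2 * (2 * (m + 2) * (p.roots.esymm (m + 2) *
    p.roots.esymm m) - (m + 1) * p.roots.esymm (m + 1) ^ 2)) * hsign

theorem Splits.newton_inequality {p : ℝ[X]} (hp : p.Splits) (j : ℕ) (hj : j + 2 ≤ p.natDegree) :
    ((j : ℝ) + 2) * (p.natDegree - j) * (p.coeff j * p.coeff (j + 2))
      ≤ ((j : ℝ) + 1) * (p.natDegree - j - 1) * p.coeff (j + 1) ^ 2 := by
  induction j generalizing p with
  | zero => simpa [mul_assoc] using hp.newton_inequality_coeff_zero hj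
  | succ j ih =>
    have h := ih hp.derivative (by rw [natDegree_derivative]; omega)
    simp only [coeff_derivative, natDegree_derivative] at h
    rw [Nat.cast_sub (by omega)] at h
    push_cast at h ⊢
    refine le_of_mul_le_mul_left ?_ (by positivity : (0 : ℝ) < (j + 1) * (j + 2))
    linear_combination h

end Polynomial

namespace Multiset

theorem splits_prod_X_add_C (s : Multiset ℝ) : (s.map (X + C ·)).prod.Splits :=
  Splits.multisetProd (by simp [Splits.X_add_C])

theorem natDegree_prod_X_add_C (s : Multiset ℝ) : (s.map (X + C ·)).prod.natDegree = card s := by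
  rw [natDegree_multiset_prod_of_monic _ (by simpa using fun a _ => monic_X_add_C a)]
  simp

theorem newton_inequality (s : Multiset ℝ) (a : ℕ) (ha : a + 2 ≤ card s) :
    ((a : ℝ) + 2) * (card s - a) * (s.esymm a * s.esymm (a + 2))
      ≤ ((a : ℝ) + 1) * (card s - a - 1) * s.esymm (a + 1) ^ 2 := by
  obtain ⟨j, hj⟩ : ∃ j, card s = a + 2 + j := ⟨_, (Nat.add_sub_cancel' ha).symm⟩
  have h := s.splits_prod_X_add_C.newton_inequality j (by rw [natDegree_prod_X_add_C]; omega)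
  rw [natDegree_prod_X_add_C] at h
  rw [prod_X_add_C_coeff _ (by omega), prod_X_add_C_coeff _ (by omega),
    prod_X_add_C_coeff _ (by omega), hj, show a + 2 + j - j = a + 2 by omega,
    show a + 2 + j - (j + 1) = a + 1 by omega, show a + 2 + j - (j + 2) = a by omega] at h
  rw [hj]
  push_cast at h ⊢
  linarith

theorem newton_inequality_div_choose (s : Multiset ℝ) (a : ℕ) (ha : a + 2 ≤ card s) :
    s.esymm a / (card s).choose a * (s.esymm (a + 2) / (card s).choose (a + 2))
      ≤ (s.esymm (a + 1) / (card s).choose (a + 1)) ^ 2 := by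
  have hchoose (k : ℕ) (hk : k ≤ card s) :
      ((card s).choose (k + 1) : ℝ) * (k + 1) = (card s).choose k * (card s - k) := by
    rw [← Nat.cast_sub hk]; exact_mod_cast Nat.choose_succ_right_eq (card s) k
  have h0 := hchoose a (by omega)
  have h1 := hchoose (a + 1) (by omega)
  push_cast [add_assoc, one_add_one_eq_two] at h1
  have hpos (k : ℕ) (hk : k ≤ card s) : (0 : ℝ) < (card s).choose k := by
    exact_mod_cast Nat.choose_pos hk
  have hna : (0 : ℝ) < card s - a - 1 := by
    rw [sub_sub, sub_pos]; exact_mod_cast (show a + 1 < card s by omega)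
  rw [div_mul_div_comm, div_pow, div_le_div_iff₀ (mul_pos (hpos a (by omega)) (hpos _ ha))
    (pow_pos (hpos _ (by omega)) 2)]
  refine le_of_mul_le_mul_left ?_ (by positivity : (0 : ℝ) < (a + 1) * (card s - a - 1))
  have h := mul_le_mul_of_nonneg_left (s.newton_inequality a ha)
    (mul_pos (hpos a (by omega)) (hpos _ ha)).le
  linear_combination h + s.esymm a * s.esymm (a + 2) * ((card s - a - 1) *
    (card s).choose (a + 1) * h0 - (card s).choose a * (card s - a) * h1)

theorem prod_map_add_X_add_C (s : Multiset ℝ) (ε : ℝ) :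
    ((s.map (· + ε)).map (X + C ·)).prod = taylor ε (s.map (X + C ·)).prod := by
  rw [taylor_apply, multiset_prod_comp, map_map, map_map]
  refine congrArg _ (map_congr rfl fun a _ => ?_)
  simp only [Function.comp_apply, add_comp, X_comp, C_comp, C_add]
  ring

theorem esymm_map_add_eq_eval {s : Multiset ℝ} {m : ℕ} (hm : m ≤ card s) (ε : ℝ) :
    (s.map (· + ε)).esymm m = ((s.map (X + C ·)).prod.hasseDeriv (card s - m)).eval ε := by
  have h := prod_X_add_C_coeff (s.map (· + ε)) (k := card s - m) (by simp)
  rwa [prod_map_add_X_add_C, taylor_coeff, card_map, Nat.sub_sub_self hm, eq_comm] at h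

theorem esymm_map_add_pos {s : Multiset ℝ} {m : ℕ} (hm : m ≤ card s)
    (hs : ∀ i ≤ m, 0 ≤ s.esymm i) {ε : ℝ} (hε : 0 < ε) : 0 < (s.map (· + ε)).esymm m := by
  set p := (s.map (X + C ·)).prod
  have hcoeff (i : ℕ) (hi : i ≤ m) : (p.hasseDeriv (card s - m)).coeff i
      = (i + (card s - m)).choose (card s - m) * s.esymm (m - i) := by
    rw [hasseDeriv_coeff, prod_X_add_C_coeff _ (by omega),
      show card s - (i + (card s - m)) = m - i by omega]
  have hdeg : (p.hasseDeriv (card s - m)).natDegree < m + 1 := by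
    have := natDegree_hasseDeriv_le p (card s - m)
    rw [natDegree_prod_X_add_C] at this
    omega
  rw [esymm_map_add_eq_eval hm, eval_eq_sum_range' hdeg]
  refine Finset.sum_pos' (fun i hi => ?_) ⟨m, self_mem_range_succ m, ?_⟩
  · rw [hcoeff i (Nat.lt_succ_iff.mp (Finset.mem_range.mp hi))]
    have := hs (m - i) (Nat.sub_le m i)
    positivity
  · rw [hcoeff m le_rfl, Nat.sub_self, esymm_zero, mul_one]
    have : 0 < (m + (card s - m)).choose (card s - m) := Nat.choose_pos (by omega)
    positivity

end Multiset

section LogConcave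

variable {q : ℕ → ℝ} {k : ℕ}

theorem pow_succ_le_pow_of_sq_le (h0 : q 0 = 1) (hpos : ∀ m ≤ k, 0 < q m)
    (hq : ∀ a, a + 2 ≤ k → q a * q (a + 2) ≤ q (a + 1) ^ 2) :
    ∀ m, m + 1 ≤ k → q (m + 1) ^ m ≤ q m ^ (m + 1)
  | 0, _ => by simp [h0]
  | m + 1, hm => by
    have hm2 := hpos (m + 2) hm
    refine le_of_mul_le_mul_right ?_ (pow_pos (hpos (m + 1) (by omega)) m)
    calc q (m + 2) ^ (m + 1) * q (m + 1) ^ m ≤ q (m + 2) ^ (m + 1) * q m ^ (m + 1) := by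
          gcongr; exact pow_succ_le_pow_of_sq_le h0 hpos hq m (by omega)
      _ = (q m * q (m + 2)) ^ (m + 1) := by ring
      _ ≤ (q (m + 1) ^ 2) ^ (m + 1) := by
          gcongr; exacts [mul_nonneg (hpos m (by omega)).le hm2.le, hq m hm]
      _ = q (m + 1) ^ (m + 1 + 1) * q (m + 1) ^ m := by ring

theorem antitoneOn_rpow_one_div_of_sq_le (h0 : q 0 = 1) (hpos : ∀ m ≤ k, 0 < q m)
    (hq : ∀ a, a + 2 ≤ k → q a * q (a + 2) ≤ q (a + 1) ^ 2) :
    AntitoneOn (fun m : ℕ => q m ^ ((1 : ℝ) / m)) (Set.Icc 1 k) := by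
  refine antitoneOn_of_succ_le Set.ordConnected_Icc fun m _ hm hm' => ?_
  simp only [Set.mem_Icc, Order.succ_eq_add_one] at hm hm' ⊢
  have hA := hpos (m + 1) hm'.2
  have hB := hpos m hm.2
  rw [← pow_le_pow_iff_left₀ (by positivity) (by positivity)
      (Nat.mul_ne_zero (by omega) (by omega) : (m + 1) * m ≠ 0),
    pow_mul, pow_mul', one_div, one_div, Real.rpow_inv_natCast_pow hA.le (by omega),
    Real.rpow_inv_natCast_pow hB.le (by omega)]
  exact pow_succ_le_pow_of_sq_le h0 hpos hq m hm'.2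

end LogConcave

namespace Multiset

theorem maclaurin_of_esymm_pos (s : Multiset ℝ) {k : ℕ} (hk : k ≤ card s)
    (hs : ∀ m ≤ k, 0 < s.esymm m) :
    AntitoneOn (fun m : ℕ => (s.esymm m / (card s).choose m) ^ ((1 : ℝ) / m)) (Set.Icc 1 k) :=
  antitoneOn_rpow_one_div_of_sq_le (by simp [esymm_zero])
    (fun m hm => div_pos (hs m hm) (by exact_mod_cast Nat.choose_pos (hm.trans hk)))
    (fun a ha => s.newton_inequality_div_choose a (ha.trans hk))

theorem maclaurin_of_esymm_nonneg (s : Multiset ℝ) {k : ℕ} (hk : k ≤ card s)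
    (hs : ∀ m ≤ k, 0 ≤ s.esymm m) :
    AntitoneOn (fun m : ℕ => (s.esymm m / (card s).choose m) ^ ((1 : ℝ) / m)) (Set.Icc 1 k) := by
  intro i hi j hj hij
  let F (m : ℕ) (ε : ℝ) := ((s.map (· + ε)).esymm m / (card s).choose m) ^ ((1 : ℝ) / m)
  have hF (m : ℕ) (hm : m ≤ k) : Continuous (F m) := by
    simp only [F, esymm_map_add_eq_eval (hm.trans hk)]
    exact ((Polynomial.continuous _).div_const _).rpow_const fun _ => Or.inr (by positivity)
  have hshift (ε : ℝ) (hε : ε ∈ Set.Ioi 0) : F j ε ≤ F i ε := by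
    simpa [F] using (s.map (· + ε)).maclaurin_of_esymm_pos (by simpa using hk)
      (fun m hm => esymm_map_add_pos (hm.trans hk) (fun l hl => hs l (hl.trans hm)) hε) hi hj hij
  simpa [F] using ContinuousWithinAt.closure_le (by simp : (0 : ℝ) ∈ closure (Set.Ioi 0)) (hF j hj.2).continuousWithinAt
    (hF i hi.2).continuousWithinAt hshift

end Multiset

theorem maclaurin_on_garding_cone_general (n k : ℕ) (hkn : k ≤ n)
    (x : Fin n → ℝ) (hx : ∀ m : ℕ, 1 ≤ m → m ≤ k → 0 ≤ esymm n m x)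
    (i j : ℕ) (hi : 1 ≤ i) (hij : i ≤ j) (hjk : j ≤ k) :
    (esymm n j x / (n.choose j : ℝ)) ^ ((1 : ℝ) / j)
      ≤ (esymm n i x / (n.choose i : ℝ)) ^ ((1 : ℝ) / i) := by
  have hesymm (m : ℕ) : esymm n m x = (univ.val.map x).esymm m := (esymm_map_val x univ m).symm
  have hcard : Multiset.card (univ.val.map x) = n := by simp
  have hs (m : ℕ) (hm : m ≤ k) : 0 ≤ (univ.val.map x).esymm m := by
    rcases Nat.eq_zero_or_pos m with rfl | hm0
    · simp [Multiset.esymm_zero]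
    · exact hesymm m ▸ hx m hm0 hm
  have := (univ.val.map x).maclaurin_of_esymm_nonneg (hcard.symm ▸ hkn) hs
    ⟨hi, hij.trans hjk⟩ ⟨hi.trans hij, hjk⟩ hij
  simpa only [hesymm, hcard] using this

/-- Maclaurin inequalities on the Gårding cone `Γ_k`. -/
theorem maclaurin_on_garding_cone (n k : ℕ) (hk1 : 1 ≤ k) (hkn : k ≤ n)
    (x : Fin n → ℝ) (hx : ∀ m : ℕ, 1 ≤ m → m ≤ k → 0 ≤ esymm n m x)
    (i j : ℕ) (hi : 1 ≤ i) (hij : i ≤ j) (hjk : j ≤ k) :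
    (esymm n j x / (n.choose j : ℝ)) ^ ((1 : ℝ) / j)
      ≤ (esymm n i x / (n.choose i : ℝ)) ^ ((1 : ℝ) / i) :=
  maclaurin_on_garding_cone_general n k hkn x hx i j hi hij hjk
end

section
/- The set $\Gamma_k^\circ := \{x \in \mathbf{R}^n : S_1(x) > 0, \ldots, S_k(x) > 0\}$ is an open convex cone in $\mathbf{R}^n$, and its closure equals $\Gamma_k := \{x \in \mathbf{R}^n : S_1(x) \ge 0, \ldots, S_k(x) \ge 0\}$. -/
open Finset

/-!
`S_k` is hyperbolic in the direction `1 = (1, …, 1)`: the polynomial `t ↦ S_k(x + t • 1)` is a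
multiple of the `(n - k)`-th derivative of `∏ i, (t + x i)`, so by Gauss–Lucas all its complex
roots are real. Gårding's argument moves this to every direction `v ∈ Γ_k^∘`, using that the
roots of a polynomial depend continuously on its coefficients and that `Γ_k^∘` is star-convex
about `1`, hence connected:

* for `s > 0` the roots `t` of `S_k(u + s i • 1 + t v)` never meet the real axis as `v` moves in
  the cone, and for `v = 1` they lie in the lower half-plane; letting `s → 0` shows that
  `t ↦ S_k(u + t v)` has only real roots;
* for `u, v ∈ Γ_k^∘` the roots of `t ↦ S_k(w + t v)` therefore never meet the imaginary axis as
  `w` moves in the cone, and they all equal `-1` for `w = v`; so `S_k(w + v) ≠ 0` on the cone, and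
  `S_k(u + v) > 0`.

Applied to every `S_m` with `m ≤ k` this gives convexity. For the closure: if
`S_1(x), …, S_k(x) ≥ 0` then `x + t • 1 ∈ Γ_k^∘` for `t > 0`, as the coefficients of
`t ↦ S_m(x + t • 1)` are nonnegative multiples of the `S_j(x)`, `j ≤ m`.
-/

open Polynomial Filter Topology

namespace Polynomial

theorem exists_mem_roots_norm_sub_lt_mul {K : Type*} [NormedField K] {f g : K[X]}
    (hf : f.Monic) (hg : g.Monic) (hdeg : g.natDegree = f.natDegree) (hsplit : g.Splits)
    {a : K} (ha : f.IsRoot a) {c : ℝ} (hc : 0 < c)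
    (hcoeff : ∀ i, ‖g.coeff i - f.coeff i‖ < c ^ f.natDegree / (f.natDegree + 1)) :
    ∃ b ∈ g.roots, ‖a - b‖ < c * max ‖a‖ 1 := by
  have hk : f.natDegree ≠ 0 := fun h => by
    rw [hf.natDegree_eq_zero.mp h] at ha
    simp at ha
  obtain ⟨b, hb, hab⟩ :=
    exists_roots_norm_sub_lt_of_norm_coeff_sub_lt (by positivity) ha hf hg hdeg hcoeff hsplit
  refine ⟨b, hb, hab.trans_eq ?_⟩
  rw [mul_div_cancel₀ _ (by positivity), Real.pow_rpow_inv_natCast hc.le hk]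

section Families

variable {X K : Type*} [TopologicalSpace X] [NormedField K] {P : X → K[X]} {k : ℕ}

theorem eventually_norm_coeff_sub_lt (hdeg : ∀ x, (P x).natDegree = k)
    (hcont : ∀ j, Continuous fun x => (P x).coeff j) (x₀ : X) {ε : ℝ} (hε : 0 < ε) :
    ∀ᶠ x in 𝓝 x₀, ∀ i, ‖(P x).coeff i - (P x₀).coeff i‖ < ε := by
  have hlow : ∀ᶠ x in 𝓝 x₀, ∀ i ∈ range (k + 1), ‖(P x).coeff i - (P x₀).coeff i‖ < ε :=
    (eventually_all_finset _).mpr fun i _ =>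
      (((hcont i).sub continuous_const).norm.tendsto' x₀ 0 (by simp)).eventually_lt_const hε
  filter_upwards [hlow] with x hx i
  by_cases hi : i ≤ k
  · exact hx i (mem_range.mpr (Nat.lt_succ_of_le hi))
  · rw [coeff_eq_zero_of_natDegree_lt (by rw [hdeg]; omega),
      coeff_eq_zero_of_natDegree_lt (by rw [hdeg]; omega)]
    simpa using hε

variable [IsAlgClosed K]

theorem eventually_exists_mem_roots_norm_sub_lt (hmonic : ∀ x, (P x).Monic)
    (hdeg : ∀ x, (P x).natDegree = k) (hcont : ∀ j, Continuous fun x => (P x).coeff j)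
    {x₀ : X} {a : K} (ha : a ∈ (P x₀).roots) {δ : ℝ} (hδ : 0 < δ) :
    ∀ᶠ x in 𝓝 x₀, ∃ b ∈ (P x).roots, ‖a - b‖ < δ := by
  have hc : 0 < δ / max ‖a‖ 1 := by positivity
  filter_upwards [eventually_norm_coeff_sub_lt hdeg hcont x₀
    (ε := (δ / max ‖a‖ 1) ^ k / (k + 1)) (by positivity)] with x hx
  obtain ⟨b, hb, hab⟩ := exists_mem_roots_norm_sub_lt_mul (hmonic x₀) (hmonic x)
    (by rw [hdeg, hdeg]) (IsAlgClosed.splits _) (isRoot_of_mem_roots ha) hc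
    (by rw [hdeg]; exact hx)
  exact ⟨b, hb, by rwa [div_mul_cancel₀ _ (by positivity)] at hab⟩

theorem eventually_forall_mem_roots_exists_norm_sub_lt (hmonic : ∀ x, (P x).Monic)
    (hdeg : ∀ x, (P x).natDegree = k) (hcont : ∀ j, Continuous fun x => (P x).coeff j)
    (x₀ : X) {δ : ℝ} (hδ : 0 < δ) :
    ∀ᶠ x in 𝓝 x₀, ∀ a ∈ (P x).roots, ∃ b ∈ (P x₀).roots, ‖a - b‖ < δ := by
  set B : ℝ := ((P x₀).cauchyBound : ℝ)
  have hB : 1 ≤ B := by simp [B]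
  set c : ℝ := min (1 / 2) (δ / (2 * B))
  have hc : 0 < c := by positivity
  filter_upwards [eventually_norm_coeff_sub_lt hdeg hcont x₀ (ε := c ^ k / (k + 1))
    (by positivity)] with x hx a ha
  obtain ⟨b, hb, hab⟩ := exists_mem_roots_norm_sub_lt_mul (hmonic x) (hmonic x₀)
    (by rw [hdeg, hdeg]) (IsAlgClosed.splits _) (isRoot_of_mem_roots ha) hc
    (by rw [hdeg]; exact fun i => by rw [norm_sub_rev]; exact hx i)
  refine ⟨b, hb, hab.trans_le ?_⟩
  -- `a` is within `‖a‖ / 2` of the root `b`, whose norm is below the Cauchy bound `B`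
  have hbB : ‖b‖ < B := (isRoot_of_mem_roots hb).norm_lt_cauchyBound (hmonic x₀).ne_zero
  have hmax : max ‖a‖ 1 ≤ 2 * B := by
    have : ‖a‖ ≤ ‖b‖ + ‖a - b‖ := norm_le_insert' a b
    have : c * max ‖a‖ 1 ≤ 1 / 2 * max ‖a‖ 1 := by gcongr; exact min_le_left _ _
    rcases le_total ‖a‖ 1 with h | h
    · rw [max_eq_right h]; linarith
    · rw [max_eq_left h] at *; linarith
  calc c * max ‖a‖ 1 ≤ δ / (2 * B) * (2 * B) := by gcongr; exact min_le_right _ _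
    _ = δ := div_mul_cancel₀ _ (by positivity)

theorem forall_mem_roots_lt_zero_of_preconnectedSpace [PreconnectedSpace X]
    (hmonic : ∀ x, (P x).Monic) (hdeg : ∀ x, (P x).natDegree = k)
    (hcont : ∀ j, Continuous fun x => (P x).coeff j) {φ : K → ℝ} (hφ : Continuous φ)
    (hne : ∀ x, ∀ z ∈ (P x).roots, φ z ≠ 0) {x₀ : X} (h₀ : ∀ z ∈ (P x₀).roots, φ z < 0)
    (x : X) : ∀ z ∈ (P x).roots, φ z < 0 := by
  classical
  set S := {x | ∀ z ∈ (P x).roots, φ z < 0}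
  have hS : IsOpen S := isOpen_iff_mem_nhds.mpr fun x hx => by
    obtain ⟨δ, hδ, hthick⟩ :=
      (P x).roots.toFinset.finite_toSet.isCompact.exists_thickening_subset_open
        (isOpen_lt hφ continuous_const) fun z hz => hx z (Multiset.mem_toFinset.mp hz)
    filter_upwards [eventually_forall_mem_roots_exists_norm_sub_lt hmonic hdeg hcont x hδ]
      with y hy z hz
    obtain ⟨b, hb, hzb⟩ := hy z hz
    exact hthick (Metric.mem_thickening_iff.mpr
      ⟨b, Multiset.mem_toFinset.mpr hb, by rwa [dist_eq_norm]⟩)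
  have hSc : IsOpen Sᶜ := isOpen_iff_mem_nhds.mpr fun x hx => by
    obtain ⟨z, hz, hφz⟩ : ∃ z ∈ (P x).roots, 0 < φ z := by
      have hx : ¬ ∀ z ∈ (P x).roots, φ z < 0 := hx
      push Not at hx
      obtain ⟨z, hz, hle⟩ := hx
      exact ⟨z, hz, hle.lt_of_ne' (hne x z hz)⟩
    obtain ⟨δ, hδ, hball⟩ := Metric.isOpen_iff.mp (isOpen_lt continuous_const hφ) z hφz
    filter_upwards [eventually_exists_mem_roots_norm_sub_lt hmonic hdeg hcont hz hδ]
      with y ⟨b, hb, hzb⟩ hy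
    exact (hy b hb).not_gt (hball (by rwa [Metric.mem_ball, dist_comm, dist_eq_norm]))
  change x ∈ S
  rw [IsClopen.eq_univ ⟨isOpen_compl_iff.mp hSc, hS⟩ ⟨x₀, h₀⟩]
  trivial

end Families

section ContinuousCoeff

variable {X R ι : Type*} [TopologicalSpace X] [CommSemiring R] [TopologicalSpace R]

theorem continuous_coeff_C {f : X → R} (hf : Continuous f) (j : ℕ) :
    Continuous fun x => (C (f x)).coeff j := by
  by_cases hj : j = 0 <;> simp [coeff_C, hj, hf, continuous_const]

variable [IsTopologicalSemiring R]

theorem continuous_coeff_add {P Q : X → R[X]} (hP : ∀ j, Continuous fun x => (P x).coeff j)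
    (hQ : ∀ j, Continuous fun x => (Q x).coeff j) (j : ℕ) :
    Continuous fun x => (P x + Q x).coeff j := by
  simp only [coeff_add]
  exact (hP j).add (hQ j)

theorem continuous_coeff_mul {P Q : X → R[X]} (hP : ∀ j, Continuous fun x => (P x).coeff j)
    (hQ : ∀ j, Continuous fun x => (Q x).coeff j) (j : ℕ) :
    Continuous fun x => (P x * Q x).coeff j := by
  simp only [coeff_mul]
  exact continuous_finsetSum _ fun p _ => (hP p.1).mul (hQ p.2)

theorem continuous_coeff_sum {s : Finset ι} {P : ι → X → R[X]}
    (hP : ∀ i ∈ s, ∀ j, Continuous fun x => (P i x).coeff j) (j : ℕ) :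
    Continuous fun x => (∑ i ∈ s, P i x).coeff j := by
  simp only [finsetSum_coeff]
  exact continuous_finsetSum _ fun i hi => hP i hi j

theorem continuous_coeff_prod {s : Finset ι} {P : ι → X → R[X]}
    (hP : ∀ i ∈ s, ∀ j, Continuous fun x => (P i x).coeff j) (j : ℕ) :
    Continuous fun x => (∏ i ∈ s, P i x).coeff j := by
  simp only [← Finset.prod_apply]
  refine Finset.prod_induction P (fun Q => ∀ j, Continuous fun x => (Q x).coeff j)
    (fun _ _ => continuous_coeff_mul) (fun j => ?_) hP j
  simpa [coeff_one] using continuous_const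

end ContinuousCoeff

theorem rootSet_derivative_subset_of_convex {P : ℂ[X]} {s : Set ℂ} (hs : Convex ℝ s)
    (hP : P.rootSet ℂ ⊆ s) : P.derivative.rootSet ℂ ⊆ s := by
  rcases le_or_gt P.degree 0 with h | h
  · rw [eq_C_of_degree_le_zero h, derivative_C, rootSet_zero]
    exact Set.empty_subset s
  · exact (rootSet_derivative_subset_convexHull_rootSet h).trans (convexHull_min hP hs)

theorem rootSet_iterate_derivative_subset_of_convex {P : ℂ[X]} {s : Set ℂ} (hs : Convex ℝ s)
    (hP : P.rootSet ℂ ⊆ s) (j : ℕ) : (derivative^[j] P).rootSet ℂ ⊆ s := by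
  induction j generalizing P with
  | zero => exact hP
  | succ j ih => exact ih (rootSet_derivative_subset_of_convex hs hP)

end Polynomial

section Esymm

variable {ι R : Type*} [Fintype ι]

/-- `esymm n m` for vectors over any commutative semiring: `esymm n m x` is `esymmOf m x` by
definition. -/
noncomputable def esymmOf [CommSemiring R] (m : ℕ) (w : ι → R) : R :=
  ∑ s ∈ powersetCard m univ, ∏ i ∈ s, w i

variable [CommSemiring R] {m : ℕ}

theorem map_esymmOf {S : Type*} [CommSemiring S] (f : R →+* S) (m : ℕ) (w : ι → R) :
    f (esymmOf m w) = esymmOf m (fun i => f (w i)) := by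
  simp [esymmOf, map_sum, map_prod]

theorem esymmOf_smul (c : R) (w : ι → R) : esymmOf m (c • w) = c ^ m * esymmOf m w := by
  rw [esymmOf, esymmOf, mul_sum]
  refine sum_congr rfl fun s hs => ?_
  rw [← (mem_powersetCard.mp hs).2]
  simp [prod_mul_distrib]

@[simp] theorem esymmOf_zero (w : ι → R) : esymmOf 0 w = 1 := by
  simp [esymmOf]

theorem esymmOf_one (m : ℕ) : esymmOf m (1 : ι → R) = (Fintype.card ι).choose m := by
  simp [esymmOf]

theorem continuous_esymmOf [TopologicalSpace R] [IsTopologicalSemiring R] (m : ℕ) :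
    Continuous (esymmOf m : (ι → R) → R) := by
  unfold esymmOf
  fun_prop

theorem coeff_prod_X_add_C (w : ι → R) {j : ℕ} (hj : j ≤ Fintype.card ι) :
    (∏ i, (X + C (w i))).coeff j = esymmOf (Fintype.card ι - j) w :=
  Finset.prod_X_add_C_coeff _ w hj

theorem natDegree_prod_X_add_C [Nontrivial R] (w : ι → R) :
    (∏ i, (X + C (w i))).natDegree = Fintype.card ι := by
  rw [natDegree_prod_of_monic _ _ fun i _ => monic_X_add_C (w i)]
  simp

theorem esymmOf_add_const {R : Type*} [CommRing R] (w : ι → R) (hm : m ≤ Fintype.card ι)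
    (z : R) : esymmOf m (fun i => w i + z) =
      (hasseDeriv (Fintype.card ι - m) (∏ i, (X + C (w i)))).eval z := by
  have htaylor : taylor z (∏ i, (X + C (w i))) = ∏ i, (X + C (w i + z)) := by
    simp only [taylor_apply, Polynomial.prod_comp, add_comp, X_comp, C_comp, C_add]
    exact prod_congr rfl fun i _ => by ring
  rw [← taylor_coeff, htaylor, coeff_prod_X_add_C _ (Nat.sub_le _ _), Nat.sub_sub_self hm]

theorem esymmOf_add_const_pos {x : ι → ℝ} (hm : m ≤ Fintype.card ι)
    (hx : ∀ j, 1 ≤ j → j ≤ m → 0 ≤ esymmOf j x) {t : ℝ} (ht : 0 < t) :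
    0 < esymmOf m (fun i => x i + t) := by
  set d := Fintype.card ι - m
  set p := ∏ i, (X + C (x i))
  have hdeg : (hasseDeriv d p).natDegree < m + 1 := by
    have := natDegree_hasseDeriv_le p d
    rw [natDegree_prod_X_add_C] at this
    omega
  have hcoeff : ∀ i ≤ m,
      (hasseDeriv d p).coeff i = ((i + d).choose d : ℝ) * esymmOf (m - i) x := by
    intro i hi
    rw [hasseDeriv_coeff, coeff_prod_X_add_C _ (by omega)]
    congr 2
    omega
  rw [esymmOf_add_const x hm, eval_eq_sum_range' hdeg]
  refine sum_pos' (fun i hi => ?_) ⟨m, self_mem_range_succ m, ?_⟩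
  · have hi : i ≤ m := Nat.lt_succ_iff.mp (mem_range.mp hi)
    rw [hcoeff i hi]
    have : 0 ≤ esymmOf (m - i) x := by
      rcases Nat.eq_zero_or_pos (m - i) with h | h
      · simp [h]
      · exact hx _ h (Nat.sub_le m i)
    positivity
  · rw [hcoeff m le_rfl, Nat.sub_self, esymmOf_zero, mul_one]
    have : 0 < (m + d).choose d := Nat.choose_pos (by omega)
    positivity

theorem esymmOf_ofReal (m : ℕ) (x : ι → ℝ) :
    esymmOf m (fun i => (x i : ℂ)) = esymmOf m x :=
  (map_esymmOf Complex.ofRealHom m x).symm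

theorem im_eq_zero_of_esymmOf_add_const_eq_zero {x : ι → ℝ} (hm : m ≤ Fintype.card ι) {z : ℂ}
    (hz : esymmOf m (fun i => (x i : ℂ) + z) = 0) : z.im = 0 := by
  set d := Fintype.card ι - m
  set p : ℂ[X] := ∏ i, (X + C (x i : ℂ))
  have hreal : Convex ℝ {w : ℂ | w.im = 0} := convex_hyperplane Complex.imLm.isLinear 0
  have hp : p.rootSet ℂ ⊆ {w : ℂ | w.im = 0} := by
    intro w hw
    obtain ⟨i, -, hi⟩ :=
      prod_eq_zero_iff.mp (by simpa [p, eval_prod] using (mem_rootSet.mp hw).2)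
    simpa using congrArg Complex.im hi
  have hne : hasseDeriv d p ≠ 0 := by
    intro h
    have := congrArg (coeff · m) h
    simp only [hasseDeriv_coeff, p,
      coeff_prod_X_add_C _ (by omega : m + d ≤ Fintype.card ι)] at this
    simp [show Fintype.card ι - (m + d) = 0 by omega, Nat.choose_eq_zero_iff] at this
  rw [esymmOf_add_const _ hm] at hz
  refine rootSet_iterate_derivative_subset_of_convex hreal hp d (mem_rootSet.mpr ⟨?_, ?_⟩)
  · rw [← factorial_smul_hasseDeriv]
    simpa [Nat.factorial_ne_zero] using hne
  · rw [← factorial_smul_hasseDeriv]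
    simp [p, d, hz]

end Esymm

section LinePoly

variable {ι K : Type*} [Fintype ι] [Field K] {k : ℕ}

theorem natDegree_esymmOf_line_le (a b : ι → K) :
    (esymmOf k (fun i => C (a i) + X * C (b i))).natDegree ≤ k := by
  refine natDegree_sum_le_of_forall_le _ _ fun s hs => ?_
  refine (natDegree_prod_le _ _).trans ?_
  rw [← (mem_powersetCard.mp hs).2, card_eq_sum_ones]
  exact sum_le_sum fun i _ => by rw [add_comm, mul_comm]; exact natDegree_linear_le

theorem coeff_esymmOf_line (a b : ι → K) :
    (esymmOf k (fun i => C (a i) + X * C (b i))).coeff k = esymmOf k b := by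
  rw [esymmOf, finsetSum_coeff, esymmOf]
  refine sum_congr rfl fun s hs => ?_
  have h := coeff_prod_of_natDegree_le (s := s) (fun i => C (a i) + X * C (b i)) 1
    fun i _ => by rw [add_comm, mul_comm]; exact natDegree_linear_le
  rw [mul_one, (mem_powersetCard.mp hs).2] at h
  rw [h]
  exact prod_congr rfl fun i _ => by simp [coeff_C]

/-- The polynomial `t ↦ S_k(a + t b) / S_k(b)`. -/
noncomputable def linePoly (k : ℕ) (a b : ι → K) : K[X] :=
  C (esymmOf k b)⁻¹ * esymmOf k (fun i => C (a i) + X * C (b i))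

variable {a b : ι → K}

theorem eval_linePoly (t : K) :
    (linePoly k a b).eval t = (esymmOf k b)⁻¹ * esymmOf k (fun i => a i + t * b i) := by
  rw [linePoly, eval_mul, eval_C, ← coe_evalRingHom, map_esymmOf]
  simp only [coe_evalRingHom, eval_add, eval_mul, eval_C, eval_X]

theorem monic_linePoly (hb : esymmOf k b ≠ 0) : (linePoly k a b).Monic := by
  have hle := natDegree_esymmOf_line_le (k := k) a b
  have hcoeff := coeff_esymmOf_line (k := k) a b
  have hdeg : (esymmOf k (fun i => C (a i) + X * C (b i))).natDegree = k :=
    le_antisymm hle (le_natDegree_of_ne_zero (by rw [hcoeff]; exact hb))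
  rw [Monic, linePoly, leadingCoeff_C_mul_of_isUnit (isUnit_iff_ne_zero.mpr (inv_ne_zero hb)),
    leadingCoeff, hdeg, hcoeff, inv_mul_cancel₀ hb]

theorem natDegree_linePoly (hb : esymmOf k b ≠ 0) : (linePoly k a b).natDegree = k := by
  rw [linePoly, natDegree_C_mul (inv_ne_zero hb)]
  exact le_antisymm (natDegree_esymmOf_line_le a b)
    (le_natDegree_of_ne_zero (by rw [coeff_esymmOf_line]; exact hb))

theorem mem_roots_linePoly (hb : esymmOf k b ≠ 0) {z : K} :
    z ∈ (linePoly k a b).roots ↔ esymmOf k (fun i => a i + z * b i) = 0 := by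
  rw [mem_roots (monic_linePoly hb).ne_zero, IsRoot, eval_linePoly, mul_eq_zero,
    or_iff_right (inv_ne_zero hb)]

theorem continuous_coeff_linePoly {X : Type*} [TopologicalSpace X] [TopologicalSpace K]
    [IsTopologicalDivisionRing K] {a b : X → ι → K} (ha : ∀ i, Continuous fun x => a x i)
    (hb : ∀ i, Continuous fun x => b x i) (hb₀ : ∀ x, esymmOf k (b x) ≠ 0) (j : ℕ) :
    Continuous fun x => (linePoly k (a x) (b x)).coeff j := by
  have hbc : Continuous b := continuous_pi hb
  exact continuous_coeff_mul (continuous_coeff_C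
    (((continuous_esymmOf k).comp hbc).inv₀ hb₀)) (continuous_coeff_sum fun s _ =>
      continuous_coeff_prod fun i _ => continuous_coeff_add (continuous_coeff_C (ha i))
        (continuous_coeff_mul (fun _ => continuous_const) (continuous_coeff_C (hb i)))) j

end LinePoly

open Complex

section GardingCone

variable {ι : Type*} [Fintype ι] {k : ℕ}

def gardingCone (ι : Type*) [Fintype ι] (k : ℕ) : Set (ι → ℝ) :=
  {x | ∀ m, 1 ≤ m → m ≤ k → 0 < esymmOf m x}

theorem esymmOf_pos_of_mem_gardingCone {v : ι → ℝ} (hv : v ∈ gardingCone ι k) :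
    0 < esymmOf k v := by
  rcases Nat.eq_zero_or_pos k with rfl | hk
  · simp
  · exact hv k hk le_rfl

theorem esymmOf_ofReal_ne_zero_of_mem_gardingCone {v : ι → ℝ} (hv : v ∈ gardingCone ι k) :
    esymmOf k (fun i => (v i : ℂ)) ≠ 0 := by
  rw [esymmOf_ofReal]
  exact_mod_cast (esymmOf_pos_of_mem_gardingCone hv).ne'

theorem gardingCone_mono {l : ℕ} (hlk : l ≤ k) : gardingCone ι k ⊆ gardingCone ι l :=
  fun _ hx m hm hml => hx m hm (hml.trans hlk)

theorem isOpen_gardingCone : IsOpen (gardingCone ι k) := by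
  have : gardingCone ι k = ⋂ m ∈ Icc 1 k, {x | 0 < esymmOf m x} := by
    ext x
    simp [gardingCone, and_imp]
  rw [this]
  exact isOpen_biInter_finset fun m _ => isOpen_lt continuous_const (continuous_esymmOf m)

theorem smul_mem_gardingCone {x : ι → ℝ} (hx : x ∈ gardingCone ι k) {c : ℝ} (hc : 0 < c) :
    c • x ∈ gardingCone ι k := fun m hm hmk => by
  rw [esymmOf_smul]
  exact mul_pos (pow_pos hc m) (hx m hm hmk)

theorem add_const_mem_gardingCone (hkn : k ≤ Fintype.card ι) {x : ι → ℝ}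
    (hx : ∀ m, 1 ≤ m → m ≤ k → 0 ≤ esymmOf m x) {t : ℝ} (ht : 0 < t) :
    (fun i => x i + t) ∈ gardingCone ι k := fun _ _ hmk =>
  esymmOf_add_const_pos (hmk.trans hkn) (fun j hj hjm => hx j hj (hjm.trans hmk)) ht

theorem one_mem_gardingCone (hkn : k ≤ Fintype.card ι) : 1 ∈ gardingCone ι k :=
  fun m _ hmk => by
    rw [esymmOf_one]
    exact_mod_cast Nat.choose_pos (hmk.trans hkn)

theorem starConvex_gardingCone (hkn : k ≤ Fintype.card ι) :
    StarConvex ℝ 1 (gardingCone ι k) := by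
  intro y hy a b ha hb hab
  rcases ha.eq_or_lt with rfl | ha
  · rw [zero_add] at hab
    simpa [hab] using hy
  have h := add_const_mem_gardingCone hkn (x := b • y) (fun m hm hmk => by
    rw [esymmOf_smul]
    exact mul_nonneg (pow_nonneg hb m) (hy m hm hmk).le) ha
  convert h using 1
  funext i
  simp [add_comm]

theorem isPreconnected_gardingCone (hkn : k ≤ Fintype.card ι) :
    IsPreconnected (gardingCone ι k) :=
  ((starConvex_gardingCone hkn).isPathConnected
    (one_mem_gardingCone hkn)).isConnected.isPreconnected

theorem im_lt_zero_of_esymmOf_eq_zero (hkn : k ≤ Fintype.card ι) (u : ι → ℝ) {s : ℝ}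
    (hs : 0 < s) {v : ι → ℝ} (hv : v ∈ gardingCone ι k) {t : ℂ}
    (ht : esymmOf k (fun i => (u i : ℂ) + s * I + t * v i) = 0) : t.im < 0 := by
  have hE := fun w : gardingCone ι k => esymmOf_ofReal_ne_zero_of_mem_gardingCone w.2
  have := isPreconnected_iff_preconnectedSpace.mp (isPreconnected_gardingCone hkn)
  let P : gardingCone ι k → ℂ[X] := fun w =>
    linePoly k (fun i => (u i : ℂ) + s * I) (fun i => (w.1 i : ℂ))
  -- a real root would make `s * I` a root in the direction `1`
  have hne : ∀ w, ∀ z ∈ (P w).roots, z.im ≠ 0 := fun w z hz hz0 => by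
    rw [mem_roots_linePoly (hE w)] at hz
    rw [show z = (z.re : ℂ) from Complex.ext rfl (by simp [hz0])] at hz
    have := im_eq_zero_of_esymmOf_add_const_eq_zero (x := fun i => u i + z.re * w.1 i)
      (z := s * I) hkn (by rw [← hz]; congr 1; funext i; push_cast; ring)
    simp [hs.ne'] at this
  have h₀ : ∀ z ∈ (P ⟨1, one_mem_gardingCone hkn⟩).roots, z.im < 0 := fun z hz => by
    rw [mem_roots_linePoly (hE _)] at hz
    have := im_eq_zero_of_esymmOf_add_const_eq_zero (x := u) (z := s * I + z) hkn
      (by rw [← hz]; congr 1; funext i; simp; ring)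
    simp at this
    linarith
  have hcont : ∀ j, Continuous fun w => (P w).coeff j :=
    continuous_coeff_linePoly (fun _ => continuous_const)
      (fun i => continuous_ofReal.comp ((continuous_apply i).comp continuous_subtype_val)) hE
  exact forall_mem_roots_lt_zero_of_preconnectedSpace (fun w => monic_linePoly (hE w))
    (fun w => natDegree_linePoly (hE w)) hcont continuous_im hne h₀ ⟨v, hv⟩ t
    ((mem_roots_linePoly (hE ⟨v, hv⟩)).mpr ht)

theorem im_eq_zero_of_esymmOf_eq_zero (hkn : k ≤ Fintype.card ι) (u : ι → ℝ) {v : ι → ℝ}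
    (hv : v ∈ gardingCone ι k) {t : ℂ} (ht : esymmOf k (fun i => (u i : ℂ) + t * v i) = 0) :
    t.im = 0 := by
  have hE := esymmOf_ofReal_ne_zero_of_mem_gardingCone hv
  by_contra hne
  obtain ⟨τ, hτ, hτroot⟩ :
      ∃ τ : ℂ, 0 < τ.im ∧ esymmOf k (fun i => (u i : ℂ) + τ * v i) = 0 := by
    rcases lt_or_gt_of_ne hne with h | h
    · refine ⟨starRingEnd ℂ t, by simpa using h, ?_⟩
      simpa [map_esymmOf] using congrArg (starRingEnd ℂ) ht
    · exact ⟨t, h, ht⟩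
  let P : ℝ → ℂ[X] := fun s => linePoly k (fun i => (u i : ℂ) + s * I) (fun i => (v i : ℂ))
  have hτ₀ : τ ∈ (P 0).roots := (mem_roots_linePoly hE).mpr (by simpa using hτroot)
  have hnear := eventually_exists_mem_roots_norm_sub_lt (fun _ => monic_linePoly hE)
    (fun _ => natDegree_linePoly hE) (continuous_coeff_linePoly
      (fun _ => continuous_const.add (continuous_ofReal.mul continuous_const))
      (fun _ => continuous_const) fun _ => hE) hτ₀ hτ
  -- for small `s > 0` some root stays in the upper half-plane
  obtain ⟨s, ⟨b, hb, hτb⟩, hs⟩ :=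
    ((hnear.filter_mono nhdsWithin_le_nhds).and (self_mem_nhdsWithin (s := Set.Ioi 0))).exists
  have hbim : 0 < b.im := by
    have := (abs_im_le_norm (τ - b)).trans_lt hτb
    rw [sub_im] at this
    linarith [abs_lt.mp this]
  linarith [im_lt_zero_of_esymmOf_eq_zero hkn u hs hv ((mem_roots_linePoly hE).mp hb)]

theorem re_lt_zero_of_esymmOf_eq_zero (hkn : k ≤ Fintype.card ι) {u v : ι → ℝ}
    (hu : u ∈ gardingCone ι k) (hv : v ∈ gardingCone ι k) {t : ℂ}
    (ht : esymmOf k (fun i => (u i : ℂ) + t * v i) = 0) : t.re < 0 := by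
  have hE := esymmOf_ofReal_ne_zero_of_mem_gardingCone hv
  have := isPreconnected_iff_preconnectedSpace.mp (isPreconnected_gardingCone hkn)
  let P : gardingCone ι k → ℂ[X] := fun w =>
    linePoly k (fun i => (w.1 i : ℂ)) (fun i => (v i : ℂ))
  -- a root on the imaginary axis is real by hyperbolicity in the direction `v`, hence zero
  have hne : ∀ w, ∀ z ∈ (P w).roots, z.re ≠ 0 := fun w z hz hz0 => by
    rw [mem_roots_linePoly hE] at hz
    have hz' : z = 0 := Complex.ext hz0 (im_eq_zero_of_esymmOf_eq_zero hkn w.1 hv hz)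
    simp only [hz', zero_mul, add_zero, esymmOf_ofReal, ofReal_eq_zero] at hz
    exact (esymmOf_pos_of_mem_gardingCone w.2).ne' hz
  have h₀ : ∀ z ∈ (P ⟨v, hv⟩).roots, z.re < 0 := fun z hz => by
    rw [mem_roots_linePoly hE] at hz
    have hsmul : (fun i => (v i : ℂ) + z * v i) = (1 + z) • fun i => (v i : ℂ) := by
      funext i; simp; ring
    rw [hsmul, esymmOf_smul, mul_eq_zero, or_iff_left hE] at hz
    have : z = -1 := by linear_combination pow_eq_zero_iff'.mp hz |>.1
    simp [this]
  have hcont : ∀ j, Continuous fun w => (P w).coeff j :=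
    continuous_coeff_linePoly
      (fun i => continuous_ofReal.comp ((continuous_apply i).comp continuous_subtype_val))
      (fun _ => continuous_const) fun _ => hE
  exact forall_mem_roots_lt_zero_of_preconnectedSpace (fun _ => monic_linePoly hE)
    (fun _ => natDegree_linePoly hE) hcont continuous_re hne h₀ ⟨u, hu⟩ t
    ((mem_roots_linePoly hE).mpr ht)

theorem esymmOf_add_pos (hkn : k ≤ Fintype.card ι) {u v : ι → ℝ} (hu : u ∈ gardingCone ι k)
    (hv : v ∈ gardingCone ι k) : 0 < esymmOf k (u + v) := by
  have hne : ∀ w ∈ gardingCone ι k, esymmOf k (w + v) ≠ 0 := fun w hw h => by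
    have := re_lt_zero_of_esymmOf_eq_zero hkn hw hv (t := 1)
      (by simpa [← esymmOf_ofReal] using congrArg ((↑) : ℝ → ℂ) h)
    norm_num at this
  by_contra! hle
  have hvv : 0 < esymmOf k (v + v) := by
    rw [← two_smul ℝ v, esymmOf_smul]
    exact mul_pos (by positivity) (esymmOf_pos_of_mem_gardingCone hv)
  obtain ⟨w, hw, hw₀⟩ := (isPreconnected_gardingCone hkn).intermediate_value hu hv
    ((continuous_esymmOf k).comp (continuous_id.add continuous_const)).continuousOn
    ⟨hle, hvv.le⟩
  exact hne w hw hw₀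

theorem convex_gardingCone (hkn : k ≤ Fintype.card ι) : Convex ℝ (gardingCone ι k) :=
  convex_iff_forall_pos.mpr fun _ hx _ hy _ _ ha hb _ _ _ hmk =>
    esymmOf_add_pos (hmk.trans hkn) (smul_mem_gardingCone (gardingCone_mono hmk hx) ha)
      (smul_mem_gardingCone (gardingCone_mono hmk hy) hb)

theorem closure_gardingCone (hkn : k ≤ Fintype.card ι) :
    closure (gardingCone ι k) = {x | ∀ m, 1 ≤ m → m ≤ k → 0 ≤ esymmOf m x} := by
  refine subset_antisymm (closure_minimal (fun x hx m hm hmk => (hx m hm hmk).le) ?_)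
    fun x hx => ?_
  · simp only [Set.ofPred_forall]
    exact isClosed_iInter fun m => isClosed_iInter fun _ => isClosed_iInter fun _ =>
      isClosed_le continuous_const (continuous_esymmOf m)
  · have hlim : Tendsto (fun t : ℝ => fun i => x i + t) (𝓝[>] 0) (𝓝 x) :=
      tendsto_nhdsWithin_of_tendsto_nhds ((continuous_pi fun i =>
        continuous_const.add continuous_id).tendsto' 0 x (by simp))
    exact mem_closure_of_tendsto hlim
      (eventually_mem_nhdsWithin.mono fun t ht => add_const_mem_gardingCone hkn hx ht)

end GardingCone

theorem garding_cone_open_convex_closure_general (n k : ℕ) (hkn : k ≤ n) :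
    IsOpen {x : Fin n → ℝ | ∀ m : ℕ, 1 ≤ m → m ≤ k → 0 < esymm n m x} ∧
    Convex ℝ {x : Fin n → ℝ | ∀ m : ℕ, 1 ≤ m → m ≤ k → 0 < esymm n m x} ∧
    (∀ x ∈ {x : Fin n → ℝ | ∀ m : ℕ, 1 ≤ m → m ≤ k → 0 < esymm n m x},
      ∀ c : ℝ, 0 < c →
        c • x ∈ {x : Fin n → ℝ | ∀ m : ℕ, 1 ≤ m → m ≤ k → 0 < esymm n m x}) ∧
    closure {x : Fin n → ℝ | ∀ m : ℕ, 1 ≤ m → m ≤ k → 0 < esymm n m x}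
      = {x : Fin n → ℝ | ∀ m : ℕ, 1 ≤ m → m ≤ k → 0 ≤ esymm n m x} := by
  have hk : k ≤ Fintype.card (Fin n) := by rwa [Fintype.card_fin]
  exact ⟨isOpen_gardingCone, convex_gardingCone hk, fun _ hx _ hc => smul_mem_gardingCone hx hc,
    closure_gardingCone hk⟩

/-- The open Gårding cone `Γ_k^∘` is an open convex cone whose closure is `Γ_k`. -/
theorem garding_cone_open_convex_closure (n k : ℕ) (hk1 : 1 ≤ k) (hkn : k ≤ n) :
    IsOpen {x : Fin n → ℝ | ∀ m : ℕ, 1 ≤ m → m ≤ k → 0 < esymm n m x} ∧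
    Convex ℝ {x : Fin n → ℝ | ∀ m : ℕ, 1 ≤ m → m ≤ k → 0 < esymm n m x} ∧
    (∀ x ∈ {x : Fin n → ℝ | ∀ m : ℕ, 1 ≤ m → m ≤ k → 0 < esymm n m x},
      ∀ c : ℝ, 0 < c →
        c • x ∈ {x : Fin n → ℝ | ∀ m : ℕ, 1 ≤ m → m ≤ k → 0 < esymm n m x}) ∧
    closure {x : Fin n → ℝ | ∀ m : ℕ, 1 ≤ m → m ≤ k → 0 < esymm n m x}
      = {x : Fin n → ℝ | ∀ m : ℕ, 1 ≤ m → m ≤ k → 0 ≤ esymm n m x} :=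
  garding_cone_open_convex_closure_general n k hkn
end

section
/- Let $A \subseteq \mathbf{R}^{n+1}$ be a closed set, $x, y \in \partial A$, and $0 < r < s/2$. Suppose $u, v$ are unit vectors such that the closed ball $B(x - ru, r) \subseteq A$, the open ball $U(x + su, s)$ is disjoint from $A$, $B(y - rv, r) \subseteq A$, and $U(y + sv, s)$ is disjoint from $A$. Then $|u - v| \le \max\left\{ \frac{2(s-2r)}{r(s-r)}, \sqrt{\frac{2}{r(s-r)}} \right\} |x - y|$. -/
set_option maxHeartbeats 1000000

open Metric

open scoped RealInnerProductSpace

private lemma expand_norm_sq {E : Type*} [NormedAddCommGroup E] [InnerProductSpace ℝ E]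
    (a b c : E) (α β : ℝ) :
    ‖a + (α • b + β • c)‖ ^ 2 = ‖a‖ ^ 2 + α ^ 2 * ‖b‖ ^ 2 + β ^ 2 * ‖c‖ ^ 2
      + 2 * α * ⟪a, b⟫ + 2 * β * ⟪a, c⟫ + 2 * α * β * ⟪b, c⟫ := by
  simp only [← real_inner_self_eq_norm_sq, inner_add_left, inner_add_right,
    real_inner_smul_left, real_inner_smul_right]
  rw [real_inner_comm b a, real_inner_comm c a, real_inner_comm c b]
  ring

/-- Lipschitz estimate for inner/outer touching-ball normals of a closed set. -/
theorem normal_lipschitz_bound (n : ℕ) (A : Set (EuclideanSpace ℝ (Fin (n+1))))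
    (hA : IsClosed A) (x y : EuclideanSpace ℝ (Fin (n+1)))
    (hx : x ∈ frontier A) (hy : y ∈ frontier A)
    (r s : ℝ) (hr : 0 < r) (hrs : r < s / 2)
    (u v : EuclideanSpace ℝ (Fin (n+1))) (hu : ‖u‖ = 1) (hv : ‖v‖ = 1)
    (h1 : closedBall (x - r • u) r ⊆ A)
    (h2 : ball (x + s • u) s ∩ A = ∅)
    (h3 : closedBall (y - r • v) r ⊆ A)
    (h4 : ball (y + s • v) s ∩ A = ∅) :
    ‖u - v‖ ≤ max (2 * (s - 2 * r) / (r * (s - r)))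
      (Real.sqrt (2 / (r * (s - r)))) * ‖x - y‖ := by
  have hsr : 0 < s - r := by linarith
  have hc : 0 < s - 2 * r := by linarith
  -- shrunken outer balls
  have hsub1 : ball (x + (s - r) • u) (s - r) ⊆ ball (x + s • u) s := by
    apply ball_subset_ball'
    have hd : x + (s - r) • u - (x + s • u) = (-r) • u := by module
    rw [dist_eq_norm, hd, norm_smul, hu]
    simp [abs_of_pos hr]
  have hsub2 : ball (y + (s - r) • v) (s - r) ⊆ ball (y + s • v) s := by
    apply ball_subset_ball'
    have hd : y + (s - r) • v - (y + s • v) = (-r) • v := by module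
    rw [dist_eq_norm, hd, norm_smul, hv]
    simp [abs_of_pos hr]
  have key1 : s ≤ dist (x + (s - r) • u) (y - r • v) := by
    have hdisj : Disjoint (ball (x + (s - r) • u) (s - r)) (closedBall (y - r • v) r) := by
      rw [Set.disjoint_left]
      intro z hz hz'
      have : z ∈ ball (x + s • u) s ∩ A := ⟨hsub1 hz, h3 hz'⟩
      rw [h2] at this
      exact this
    have := (disjoint_ball_closedBall_iff hsr hr.le).mp hdisj
    linarith
  have key2 : s ≤ dist (y + (s - r) • v) (x - r • u) := by
    have hdisj : Disjoint (ball (y + (s - r) • v) (s - r)) (closedBall (x - r • u) r) := by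
      rw [Set.disjoint_left]
      intro z hz hz'
      have : z ∈ ball (y + s • v) s ∩ A := ⟨hsub2 hz, h1 hz'⟩
      rw [h4] at this
      exact this
    have := (disjoint_ball_closedBall_iff hsr hr.le).mp hdisj
    linarith
  set a := x - y with ha
  set d := ‖a‖ with hdd
  set t := ‖u - v‖ with htt
  set p := ⟪a, u⟫ with hp
  set q := ⟪a, v⟫ with hq
  set w := ⟪u, v⟫ with hw
  have hd0 : 0 ≤ d := norm_nonneg _
  have ht0 : 0 ≤ t := norm_nonneg _
  -- squared inequality 1
  have e1 : s ^ 2 ≤ d ^ 2 + (s - r) ^ 2 + r ^ 2 + 2 * (s - r) * p + 2 * r * q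
      + 2 * r * (s - r) * w := by
    have hrw : x + (s - r) • u - (y - r • v) = a + ((s - r) • u + r • v) := by
      rw [ha]; module
    rw [dist_eq_norm, hrw] at key1
    have := expand_norm_sq a u v (s - r) r
    rw [hu, hv] at this
    nlinarith [key1, norm_nonneg (a + ((s - r) • u + r • v))]
  have e2 : s ^ 2 ≤ d ^ 2 + (s - r) ^ 2 + r ^ 2 - 2 * (s - r) * q - 2 * r * p
      + 2 * r * (s - r) * w := by
    have hrw : y + (s - r) • v - (x - r • u) = (-a) + ((s - r) • v + r • u) := by
      rw [ha]; module
    rw [dist_eq_norm, hrw] at key2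
    have := expand_norm_sq (-a) v u (s - r) r
    rw [hu, hv, norm_neg, inner_neg_left, inner_neg_left, ← hdd, ← hp, ← hq] at this
    have hwc : ⟪v, u⟫ = w := by rw [hw, real_inner_comm]
    rw [hwc] at this
    nlinarith [key2, norm_nonneg ((-a) + ((s - r) • v + r • u))]
  have ht2 : t ^ 2 = 2 - 2 * w := by
    rw [htt, norm_sub_sq_real, hu, hv]; rw [hw]; ring
  have hcs : p - q ≤ d * t := by
    have h' : ⟪a, u - v⟫ ≤ ‖a‖ * ‖u - v‖ := real_inner_le_norm a (u - v)
    rw [inner_sub_right] at h'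
    exact h'
  set K := r * (s - r) with hKdef
  have hK : 0 < K := mul_pos hr hsr
  have main : K * t ^ 2 ≤ d ^ 2 + (s - 2 * r) * (d * t) := by
    nlinarith [e1, e2, hcs, ht2]
  by_cases hcase : (s - 2 * r) * (d * t) ≤ d ^ 2
  · -- sqrt branch
    have h2d : K * t ^ 2 ≤ 2 * d ^ 2 := by linarith
    have ht' : t ≤ Real.sqrt (2 / K) * d := by
      have hd2 : Real.sqrt (2 / K) * d = Real.sqrt (2 / K * d ^ 2) := by
        rw [Real.sqrt_mul (by positivity), Real.sqrt_sq hd0]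
      rw [hd2, ← Real.sqrt_sq ht0]
      apply Real.sqrt_le_sqrt
      rw [div_mul_eq_mul_div, le_div_iff₀ hK]
      nlinarith
    calc t ≤ Real.sqrt (2 / K) * d := ht'
      _ ≤ max (2 * (s - 2 * r) / K) (Real.sqrt (2 / K)) * d :=
        mul_le_mul_of_nonneg_right (le_max_right _ _) hd0
  · push_neg at hcase
    rcases eq_or_lt_of_le ht0 with ht0' | htpos
    · rw [← ht0']
      positivity
    · have hKt : K * t ≤ 2 * (s - 2 * r) * d := by
        nlinarith [main, hcase, htpos]
      have ht' : t ≤ 2 * (s - 2 * r) / K * d := by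
        rw [div_mul_eq_mul_div, le_div_iff₀ hK]
        nlinarith
      calc t ≤ 2 * (s - 2 * r) / K * d := ht'
        _ ≤ max (2 * (s - 2 * r) / K) (Real.sqrt (2 / K)) * d :=
          mul_le_mul_of_nonneg_right (le_max_left _ _) hd0
end

section
/- Let $X$ and $Y$ be finite-dimensional normed vector spaces, and let $T$ be a multivalued map assigning to each $x \in X$ a nonempty subset $T(x) \subseteq Y$. Assume $T$ is weakly continuous: for every $x \in X$ and $\epsilon > 0$ there exists $\delta > 0$ such that $\|y - x\| < \delta$ implies $T(y) \subseteq T(x) + \{v \in Y : \|v\| < \epsilon\}$. Then the set $\{x \in X : T(x) \text{ is a singleton}\}$ is a Borel subset of $X$. -/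
open scoped Pointwise NNReal ENNReal
open Metric Set Filter Topology

/-! Weak continuity says that `T y` lies in an arbitrarily thin thickening of `T x` for `y`
near `x`, so `x ↦ ediam (T x)` is upper semicontinuous and hence Borel measurable. For nonempty
values, `T x` is a singleton exactly when this diameter vanishes. -/

theorem upperSemicontinuous_ediam_of_eventually_subset_thickening
    {α E : Type*} [TopologicalSpace α] [PseudoEMetricSpace E] {T : α → Set E}
    (hT : ∀ x, ∀ ε : ℝ, 0 < ε → ∀ᶠ y in 𝓝 x, T y ⊆ thickening ε (T x)) :
    UpperSemicontinuous fun x => ediam (T x) := by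
  intro x r hr
  obtain ⟨ε, hε, hlt⟩ := ENNReal.lt_iff_exists_add_pos_lt.1 hr
  filter_upwards [hT x ((ε / 2 : ℝ≥0) : ℝ) (by positivity)] with y hy
  calc ediam (T y) ≤ ediam (thickening ((ε / 2 : ℝ≥0) : ℝ) (T x)) := ediam_mono hy
    _ ≤ ediam (T x) + 2 * ((ε / 2 : ℝ≥0) : ℝ≥0∞) := ediam_thickening_le _
    _ = ediam (T x) + ε := by norm_cast; rw [mul_div_cancel₀ _ two_ne_zero]
    _ < r := hlt

theorem singleton_set_of_weakly_continuous_multimap_measurable_general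
    {X Y : Type*} [NormedAddCommGroup X]
    [MeasurableSpace X] [BorelSpace X]
    [NormedAddCommGroup Y]
    (T : X → Set Y) (hne : ∀ x, (T x).Nonempty)
    (hwc : ∀ x : X, ∀ ε : ℝ, 0 < ε → ∃ δ : ℝ, 0 < δ ∧ ∀ y : X, ‖y - x‖ < δ →
      T y ⊆ T x + {v : Y | ‖v‖ < ε}) :
    MeasurableSet {x : X | ∃ y : Y, T x = {y}} := by
  have husc : UpperSemicontinuous fun x => ediam (T x) :=
    upperSemicontinuous_ediam_of_eventually_subset_thickening fun x ε hε => by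
      obtain ⟨δ, hδ, hsub⟩ := hwc x ε hε
      filter_upwards [ball_mem_nhds x hδ] with y hy
      rw [← add_ball_zero, ball_zero_eq]
      exact hsub y (mem_ball_iff_norm.1 hy)
  have hsingleton : {x | ∃ y, T x = {y}} = (fun x => ediam (T x)) ⁻¹' {0} := by
    ext x
    simp [ediam_eq_zero_iff, exists_eq_singleton_iff_nonempty_subsingleton, hne x]
  rw [hsingleton]
  exact husc.measurable (measurableSet_singleton 0)

/-- For a weakly continuous multivalued map with nonempty values between
finite-dimensional normed spaces, the set of points where the value is a singleton
is Borel. -/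
theorem singleton_set_of_weakly_continuous_multimap_measurable
    {X Y : Type*} [NormedAddCommGroup X] [NormedSpace ℝ X] [FiniteDimensional ℝ X]
    [MeasurableSpace X] [BorelSpace X]
    [NormedAddCommGroup Y] [NormedSpace ℝ Y] [FiniteDimensional ℝ Y]
    (T : X → Set Y) (hne : ∀ x, (T x).Nonempty)
    (hwc : ∀ x : X, ∀ ε : ℝ, 0 < ε → ∃ δ : ℝ, 0 < δ ∧ ∀ y : X, ‖y - x‖ < δ →
      T y ⊆ T x + {v : Y | ‖v‖ < ε}) :
    MeasurableSet {x : X | ∃ y : Y, T x = {y}} :=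
  singleton_set_of_weakly_continuous_multimap_measurable_general T hne hwc
end

section
/- Let $X$ and $Y$ be finite-dimensional normed vector spaces, and let $T$ be a weakly continuous multivalued map with $T(x) \neq \varnothing$ for all $x \in X$. Then the set $\mathrm{dmn}\,DT$ of points where $T$ is strongly differentiable is a Borel subset of $X$, and the derivative map $DT : \mathrm{dmn}\,DT \to \mathrm{Hom}(X,Y)$ is Borel measurable. -/
open scoped Pointwise

/-- `T` is strongly differentiable at `x` with derivative `L`. -/
def StrongDiffAt {X Y : Type*} [NormedAddCommGroup X] [NormedSpace ℝ X]
    [NormedAddCommGroup Y] [NormedSpace ℝ Y]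
    (T : X → Set Y) (x : X) (L : X →L[ℝ] Y) : Prop :=
  (∃ z : Y, T x = {z}) ∧
  ∀ ε : ℝ, 0 < ε → ∃ δ : ℝ, 0 < δ ∧ ∀ y : X, ‖y - x‖ < δ →
    ∀ w ∈ T y, ∀ z ∈ T x, ‖w - z - L (y - x)‖ ≤ ε * ‖y - x‖

open Filter Topology Metric

/-
Write `x ∈ approxWithin T L δ c` when `L` approximates `T` at `x` to within `c` on the `δ`-ball.
For any `T` with nonempty values this set is closed: at a limit point `x` the defining
inequality follows by comparing with nearby members `x'` of the set through some `z' ∈ T x'`.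
Strong differentiability at `x` is membership for every `c > 0` at some radius. Two maps
approximating `T` at one point to within `c₁` and `c₂` are `c₁ + c₂` apart, so `L` may be taken
from a countable dense set of operators, and approximants of precision tending to `0` converge
to the derivative. Hence the domain of `DT` is a countable intersection of countable unions of
closed sets, and choosing measurably, for each `n`, the first dense operator of precision
`1/(n+1)` gives measurable maps converging to `DT`.
-/

section Approximation

variable {X Y : Type*} [NormedAddCommGroup X] [NormedSpace ℝ X]
    [NormedAddCommGroup Y] [NormedSpace ℝ Y] {T : X → Set Y}

def approxWithin (T : X → Set Y) (L : X →L[ℝ] Y) (δ c : ℝ) : Set X :=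
  {x | ∀ y : X, ‖y - x‖ < δ → ∀ w ∈ T y, ∀ z ∈ T x, ‖w - z - L (y - x)‖ ≤ c * ‖y - x‖}

def approxSet (T : X → Set Y) (L : X →L[ℝ] Y) (c : ℝ) : Set X :=
  {x | ∃ δ > 0, x ∈ approxWithin T L δ c}

theorem approxWithin_mono {L : X →L[ℝ] Y} {δ δ' c c' : ℝ} (hδ : δ' ≤ δ) (hc : c ≤ c') :
    approxWithin T L δ c ⊆ approxWithin T L δ' c' :=
  fun _ hx y hy w hw z hz =>
    (hx y (hy.trans_le hδ) w hw z hz).trans (mul_le_mul_of_nonneg_right hc (norm_nonneg _))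

theorem approxSet_mono {L : X →L[ℝ] Y} {c c' : ℝ} (hc : c ≤ c') :
    approxSet T L c ⊆ approxSet T L c' :=
  fun _ ⟨δ, hδ, hx⟩ => ⟨δ, hδ, approxWithin_mono le_rfl hc hx⟩

theorem approxSet_subset_of_norm_sub_le {L L' : X →L[ℝ] Y} {c c' : ℝ} (h : ‖L - L'‖ ≤ c') :
    approxSet T L c ⊆ approxSet T L' (c + c') := by
  rintro x ⟨δ, hδ, hx⟩
  refine ⟨δ, hδ, fun y hy w hw z hz => ?_⟩
  calc ‖w - z - L' (y - x)‖ = ‖(w - z - L (y - x)) + (L - L') (y - x)‖ := by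
        congr 1; simp only [sub_apply]; abel
    _ ≤ c * ‖y - x‖ + ‖L - L'‖ * ‖y - x‖ :=
        norm_add_le_of_le (hx y hy w hw z hz) ((L - L').le_opNorm _)
    _ ≤ (c + c') * ‖y - x‖ := by nlinarith [norm_nonneg (y - x)]

theorem isClosed_approxWithin (hne : ∀ x, (T x).Nonempty) (L : X →L[ℝ] Y) (δ c : ℝ) :
    IsClosed (approxWithin T L δ c) := by
  refine isClosed_of_closure_subset fun x hx y hy w hw z hz => ?_
  have := mem_closure_iff_nhdsWithin_neBot.1 hx
  have hlim : Tendsto (fun x' => c * ‖y - x'‖ + c * ‖x - x'‖)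
      (𝓝[approxWithin T L δ c] x) (𝓝 (c * ‖y - x‖)) := by
    have hcont : Continuous fun x' => c * ‖y - x'‖ + c * ‖x - x'‖ := by fun_prop
    simpa using (hcont.tendsto x).mono_left nhdsWithin_le_nhds
  have hδ : 0 < δ := (norm_nonneg _).trans_lt hy
  have hnear_y : ∀ᶠ x' in 𝓝 x, ‖y - x'‖ < δ :=
    (continuous_const.sub continuous_id).norm.continuousAt.eventually_lt continuousAt_const hy
  have hnear_x : ∀ᶠ x' in 𝓝 x, ‖x - x'‖ < δ :=
    (continuous_const.sub continuous_id).norm.continuousAt.eventually_lt continuousAt_const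
      (by simpa using hδ)
  refine ge_of_tendsto hlim ?_
  filter_upwards [self_mem_nhdsWithin, nhdsWithin_le_nhds hnear_y,
    nhdsWithin_le_nhds hnear_x] with x' hx' hyx' hxx'
  obtain ⟨z', hz'⟩ := hne x'
  calc ‖w - z - L (y - x)‖ = ‖(w - z' - L (y - x')) - (z - z' - L (x - x'))‖ := by
        congr 1; simp only [map_sub]; abel
    _ ≤ c * ‖y - x'‖ + c * ‖x - x'‖ :=
        norm_sub_le_of_le (hx' y hyx' w hw z' hz') (hx' x hxx' z hz z' hz')

theorem approxSet_eq_iUnion (L : X →L[ℝ] Y) (c : ℝ) :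
    approxSet T L c = ⋃ m : ℕ, approxWithin T L (1 / (m + 1)) c := by
  ext x
  simp only [approxSet, Set.mem_ofPred_eq, Set.mem_iUnion]
  constructor
  · rintro ⟨δ, hδ, hx⟩
    obtain ⟨m, hm⟩ := exists_nat_one_div_lt hδ
    exact ⟨m, approxWithin_mono hm.le le_rfl hx⟩
  · rintro ⟨m, hx⟩
    exact ⟨_, Nat.one_div_pos_of_nat, hx⟩

theorem measurableSet_approxSet [MeasurableSpace X] [OpensMeasurableSpace X]
    (hne : ∀ x, (T x).Nonempty) (L : X →L[ℝ] Y) (c : ℝ) : MeasurableSet (approxSet T L c) := by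
  rw [approxSet_eq_iUnion]
  exact .iUnion fun m => (isClosed_approxWithin hne L _ c).measurableSet

theorem norm_sub_le_of_mem_approxSet (hne : ∀ x, (T x).Nonempty) {x : X} {L₁ L₂ : X →L[ℝ] Y}
    {c₁ c₂ : ℝ} (hc : 0 ≤ c₁ + c₂) (h₁ : x ∈ approxSet T L₁ c₁) (h₂ : x ∈ approxSet T L₂ c₂) :
    ‖L₁ - L₂‖ ≤ c₁ + c₂ := by
  obtain ⟨δ₁, hδ₁, h₁⟩ := h₁
  obtain ⟨δ₂, hδ₂, h₂⟩ := h₂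
  refine ContinuousLinearMap.opNorm_le_of_ball (lt_min hδ₁ hδ₂) hc fun v hv => ?_
  rw [mem_ball_zero_iff, lt_min_iff] at hv
  obtain ⟨z, hz⟩ := hne x
  obtain ⟨w, hw⟩ := hne (x + v)
  have e₁ := h₁ (x + v) (by simpa using hv.1) w hw z hz
  have e₂ := h₂ (x + v) (by simpa using hv.2) w hw z hz
  rw [add_sub_cancel_left] at e₁ e₂
  calc ‖(L₁ - L₂) v‖ = ‖(w - z - L₂ v) - (w - z - L₁ v)‖ := by
        congr 1; simp only [sub_apply]; abel
    _ ≤ c₂ * ‖v‖ + c₁ * ‖v‖ := norm_sub_le_of_le e₂ e₁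
    _ = (c₁ + c₂) * ‖v‖ := by ring

theorem exists_eq_singleton_of_mem_approxSet {x : X} (hne : (T x).Nonempty) {L : X →L[ℝ] Y}
    {c : ℝ} (h : x ∈ approxSet T L c) : ∃ z, T x = {z} := by
  obtain ⟨δ, hδ, h⟩ := h
  obtain ⟨z, hz⟩ := hne
  refine ⟨z, Set.eq_singleton_iff_unique_mem.2 ⟨hz, fun w hw => ?_⟩⟩
  simpa [sub_eq_zero] using h x (by simpa using hδ) w hw z hz

theorem strongDiffAt_iff_forall_mem_approxSet {x : X} (hne : (T x).Nonempty)
    {L : X →L[ℝ] Y} : StrongDiffAt T x L ↔ ∀ c > 0, x ∈ approxSet T L c :=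
  ⟨fun h => h.2, fun h => ⟨exists_eq_singleton_of_mem_approxSet hne (h 1 one_pos), h⟩⟩

theorem StrongDiffAt.norm_sub_le (hne : ∀ x, (T x).Nonempty) {x : X} {L L' : X →L[ℝ] Y}
    {c : ℝ} (hd : StrongDiffAt T x L') (hc : 0 ≤ c) (h : x ∈ approxSet T L c) :
    ‖L - L'‖ ≤ c :=
  le_of_forall_pos_le_add fun ε hε =>
    norm_sub_le_of_mem_approxSet hne (by positivity) h (hd.2 ε hε)

theorem exists_strongDiffAt_of_forall_mem_approxSet [CompleteSpace Y]
    (hne : ∀ x, (T x).Nonempty) {x : X} (h : ∀ c > 0, ∃ L, x ∈ approxSet T L c) :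
    ∃ L, StrongDiffAt T x L := by
  choose! L hL using h
  set u : ℕ → X →L[ℝ] Y := fun n => L (1 / (n + 1))
  have hu : ∀ n, x ∈ approxSet T (u n) (1 / (n + 1)) := fun n => hL _ Nat.one_div_pos_of_nat
  have hcauchy : CauchySeq u := by
    refine Metric.cauchySeq_iff'.2 fun ε hε => ?_
    obtain ⟨N, hN⟩ := exists_nat_one_div_lt (half_pos hε)
    refine ⟨N, fun n hn => ?_⟩
    rw [dist_eq_norm]
    calc ‖u n - u N‖ ≤ 1 / (n + 1) + 1 / (N + 1) :=
          norm_sub_le_of_mem_approxSet hne (by positivity) (hu n) (hu N)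
      _ ≤ 1 / (N + 1) + 1 / (N + 1) := by gcongr
      _ < ε := by linarith
  obtain ⟨L₀, hL₀⟩ := cauchySeq_tendsto_of_complete hcauchy
  refine ⟨L₀, (strongDiffAt_iff_forall_mem_approxSet (hne x)).2 fun ε hε => ?_⟩
  obtain ⟨n, hn, hnL₀⟩ := ((tendsto_one_div_add_atTop_nhds_zero_nat.eventually
    (gt_mem_nhds (half_pos hε))).and
    ((tendsto_iff_norm_sub_tendsto_zero.1 hL₀).eventually (gt_mem_nhds (half_pos hε)))).exists
  exact approxSet_mono (by linarith)
    (approxSet_subset_of_norm_sub_le (T := T) hnL₀.le (hu n))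

theorem setOf_exists_strongDiffAt_eq [CompleteSpace Y] (hne : ∀ x, (T x).Nonempty)
    {d : ℕ → X →L[ℝ] Y} (hd : DenseRange d) :
    {x | ∃ L, StrongDiffAt T x L} = ⋂ n : ℕ, ⋃ k : ℕ, approxSet T (d k) (1 / (n + 1)) := by
  ext x
  simp only [Set.mem_ofPred_eq, Set.mem_iInter, Set.mem_iUnion]
  constructor
  · rintro ⟨L, hL⟩ n
    have hc : (0 : ℝ) < 1 / (2 * (n + 1)) := by positivity
    obtain ⟨k, hk⟩ := hd.exists_dist_lt L hc
    rw [dist_eq_norm] at hk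
    refine ⟨k, approxSet_mono ?_ (approxSet_subset_of_norm_sub_le hk.le (hL.2 _ hc))⟩
    exact le_of_eq (by field_simp; ring)
  · intro h
    refine exists_strongDiffAt_of_forall_mem_approxSet hne fun c hc => ?_
    obtain ⟨n, hn⟩ := exists_nat_one_div_lt hc
    obtain ⟨k, hk⟩ := h n
    exact ⟨d k, approxSet_mono hn.le hk⟩

end Approximation

theorem measurable_domRestrict_of_forall_mem_dist_le {α E : Type*} [MeasurableSpace α]
    [PseudoMetricSpace E] [MeasurableSpace E] [BorelSpace E] {A : Set α} {g : α → E}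
    {S : ℕ → ℕ → Set α} {e : ℕ → E} {ε : ℕ → ℝ} (hS : ∀ n j, MeasurableSet (S n j))
    (hcover : ∀ x ∈ A, ∀ n, ∃ j, x ∈ S n j)
    (hclose : ∀ x ∈ A, ∀ n j, x ∈ S n j → dist (e j) (g x) ≤ ε n)
    (hε : Tendsto ε atTop (𝓝 0)) :
    Measurable (A.domRestrict g) := by
  classical
  have hcover' : ∀ n (x : A), ∃ j, (x : α) ∈ S n j := fun n x => hcover x x.2 n
  refine measurable_of_tendsto_metrizable (f := fun n x => e (Nat.find (hcover' n x)))
    (fun n => measurable_from_nat.comp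
      (measurable_find (hcover' n) fun j => measurable_subtype_coe (hS n j))) ?_
  refine tendsto_pi_nhds.2 fun x => tendsto_iff_dist_tendsto_zero.2 ?_
  exact squeeze_zero (fun _ => dist_nonneg)
    (fun n => hclose x x.2 n _ (Nat.find_spec (hcover' n x))) hε

theorem strong_differentiability_domain_and_derivative_measurable_general
    {X Y : Type*} [NormedAddCommGroup X] [NormedSpace ℝ X] [FiniteDimensional ℝ X]
    [MeasurableSpace X] [BorelSpace X]
    [NormedAddCommGroup Y] [NormedSpace ℝ Y] [FiniteDimensional ℝ Y]
    [MeasurableSpace (X →L[ℝ] Y)] [BorelSpace (X →L[ℝ] Y)]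
    (T : X → Set Y) (hne : ∀ x, (T x).Nonempty) :
    MeasurableSet {x : X | ∃ L : X →L[ℝ] Y, StrongDiffAt T x L} ∧
    ∀ D : X → (X →L[ℝ] Y),
      (∀ x : X, (∃ L : X →L[ℝ] Y, StrongDiffAt T x L) → StrongDiffAt T x (D x)) →
      ∀ B : Set (X →L[ℝ] Y), MeasurableSet B →
        MeasurableSet {x : X | (∃ L : X →L[ℝ] Y, StrongDiffAt T x L) ∧ D x ∈ B} := by
  have : CompleteSpace Y := FiniteDimensional.complete ℝ Y
  obtain ⟨d, hd⟩ := TopologicalSpace.exists_dense_seq (X →L[ℝ] Y)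
  set A := {x : X | ∃ L : X →L[ℝ] Y, StrongDiffAt T x L}
  have hA : A = ⋂ n : ℕ, ⋃ k : ℕ, approxSet T (d k) (1 / (n + 1)) :=
    setOf_exists_strongDiffAt_eq hne hd
  have hS : ∀ n k : ℕ, MeasurableSet (approxSet T (d k) (1 / (n + 1))) :=
    fun n k => measurableSet_approxSet hne _ _
  have hAmeas : MeasurableSet A := by
    rw [hA]; exact .iInter fun n => .iUnion fun k => hS n k
  refine ⟨hAmeas, fun D hD B hB => ?_⟩
  have hcover : ∀ x ∈ A, ∀ n : ℕ, ∃ k, x ∈ approxSet T (d k) (1 / (n + 1)) := by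
    intro x hx n; rw [hA] at hx; simpa using Set.mem_iInter.1 hx n
  have hDmeas : Measurable (A.domRestrict D) :=
    measurable_domRestrict_of_forall_mem_dist_le hS hcover
      (fun x hx n k hk => by
        rw [dist_eq_norm]; exact (hD x hx).norm_sub_le hne (by positivity) hk)
      tendsto_one_div_add_atTop_nhds_zero_nat
  convert hAmeas.subtype_image (hDmeas hB) using 1
  ext x; simp [A, and_comm]

/-- The domain of strong differentiability of a weakly continuous multivalued map is
Borel, and the derivative map is Borel measurable on it. -/
theorem strong_differentiability_domain_and_derivative_measurable
    {X Y : Type*} [NormedAddCommGroup X] [NormedSpace ℝ X] [FiniteDimensional ℝ X]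
    [MeasurableSpace X] [BorelSpace X]
    [NormedAddCommGroup Y] [NormedSpace ℝ Y] [FiniteDimensional ℝ Y]
    [MeasurableSpace (X →L[ℝ] Y)] [BorelSpace (X →L[ℝ] Y)]
    (T : X → Set Y) (hne : ∀ x, (T x).Nonempty)
    (hwc : ∀ x : X, ∀ ε : ℝ, 0 < ε → ∃ δ : ℝ, 0 < δ ∧ ∀ y : X, ‖y - x‖ < δ →
      T y ⊆ T x + {v : Y | ‖v‖ < ε}) :
    MeasurableSet {x : X | ∃ L : X →L[ℝ] Y, StrongDiffAt T x L} ∧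
    ∀ D : X → (X →L[ℝ] Y),
      (∀ x : X, (∃ L : X →L[ℝ] Y, StrongDiffAt T x L) → StrongDiffAt T x (D x)) →
      ∀ B : Set (X →L[ℝ] Y), MeasurableSet B →
        MeasurableSet {x : X | (∃ L : X →L[ℝ] Y, StrongDiffAt T x L) ∧ D x ∈ B} :=
  strong_differentiability_domain_and_derivative_measurable_general T hne
end

section
/- Let $A \subseteq \mathbf{R}^{n+1}$ be a nonempty closed set and $a \in A$. Then the set $\mathrm{Dis}(A,a) := \{u \in \mathbf{R}^{n+1} : \mathrm{dist}(a+u, A) = |u|\}$ is a closed convex set containing $0$. -/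
/-!
Since `a ∈ A`, always `dist(a + u, A) ≤ |u|`, so `u` lies in the set exactly when
`|u| ≤ |u - (c - a)|` for every `c ∈ A`. Squaring, this says `⟪c - a, u⟫ ≤ |c - a|² / 2`:
the set is an intersection of closed half-spaces, one for each `c ∈ A`, hence convex.
-/

open Metric

open scoped RealInnerProductSpace

theorem isClosed_setOf_infDist_add_eq_norm {E : Type*} [SeminormedAddCommGroup E]
    (A : Set E) (a : E) : IsClosed {u : E | infDist (a + u) A = ‖u‖} :=
  isClosed_eq ((continuous_infDist_pt A).comp (continuous_const.add continuous_id))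
    continuous_norm

theorem infDist_add_eq_norm_iff {E : Type*} [SeminormedAddCommGroup E] {A : Set E} {a : E}
    (ha : a ∈ A) (u : E) : infDist (a + u) A = ‖u‖ ↔ ∀ c ∈ A, ‖u‖ ≤ ‖u - (c - a)‖ := by
  have hle : infDist (a + u) A ≤ ‖u‖ := by
    simpa [dist_eq_norm] using infDist_le_dist_of_mem (x := a + u) ha
  have hdist (c : E) : dist (a + u) c = ‖u - (c - a)‖ := by
    rw [dist_eq_norm]
    congr 1
    abel
  simp only [← hdist]
  rw [← le_infDist ⟨a, ha⟩]
  exact ⟨ge_of_eq, hle.antisymm⟩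

section InnerProductSpace

variable {E : Type*} [NormedAddCommGroup E] [InnerProductSpace ℝ E]

theorem norm_le_norm_sub_iff_inner_le (u v : E) :
    ‖u‖ ≤ ‖u - v‖ ↔ ⟪v, u⟫ ≤ ‖v‖ ^ 2 / 2 := by
  rw [← sq_le_sq₀ (norm_nonneg _) (norm_nonneg _), norm_sub_sq_real, real_inner_comm]
  constructor <;> intro h <;> linarith

theorem setOf_infDist_add_eq_norm_eq_iInter {A : Set E} {a : E} (ha : a ∈ A) :
    {u : E | infDist (a + u) A = ‖u‖} = ⋂ c ∈ A, {u : E | ⟪c - a, u⟫ ≤ ‖c - a‖ ^ 2 / 2} := by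
  ext u
  simp only [Set.mem_ofPred_eq, Set.mem_iInter, infDist_add_eq_norm_iff ha,
    norm_le_norm_sub_iff_inner_le]

theorem convex_setOf_infDist_add_eq_norm {A : Set E} {a : E} (ha : a ∈ A) :
    Convex ℝ {u : E | infDist (a + u) A = ‖u‖} := by
  rw [setOf_infDist_add_eq_norm_eq_iInter ha]
  exact convex_iInter₂ fun c _ => convex_halfSpace_le (innerₛₗ ℝ (c - a)).isLinear _

end InnerProductSpace

theorem dis_closed_convex_general (n : ℕ) (A : Set (EuclideanSpace ℝ (Fin (n+1))))
    (a : EuclideanSpace ℝ (Fin (n+1))) (ha : a ∈ A) :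
    IsClosed {u : EuclideanSpace ℝ (Fin (n+1)) | infDist (a + u) A = ‖u‖} ∧
    Convex ℝ {u : EuclideanSpace ℝ (Fin (n+1)) | infDist (a + u) A = ‖u‖} ∧
    (0 : EuclideanSpace ℝ (Fin (n+1))) ∈
      {u : EuclideanSpace ℝ (Fin (n+1)) | infDist (a + u) A = ‖u‖} := by
  refine ⟨isClosed_setOf_infDist_add_eq_norm A a, convex_setOf_infDist_add_eq_norm ha, ?_⟩
  simp [infDist_zero_of_mem ha]

/-- For a nonempty closed set `A` and `a ∈ A`, the set
`Dis(A,a) = {u : dist(a+u, A) = |u|}` is a closed convex set containing `0`. -/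
theorem dis_closed_convex (n : ℕ) (A : Set (EuclideanSpace ℝ (Fin (n+1))))
    (hA : IsClosed A) (hAne : A.Nonempty)
    (a : EuclideanSpace ℝ (Fin (n+1))) (ha : a ∈ A) :
    IsClosed {u : EuclideanSpace ℝ (Fin (n+1)) | infDist (a + u) A = ‖u‖} ∧
    Convex ℝ {u : EuclideanSpace ℝ (Fin (n+1)) | infDist (a + u) A = ‖u‖} ∧
    (0 : EuclideanSpace ℝ (Fin (n+1))) ∈
      {u : EuclideanSpace ℝ (Fin (n+1)) | infDist (a + u) A = ‖u‖} :=
  dis_closed_convex_general n A a ha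
end

section
/- Let $A \subseteq \mathbf{R}^{n+1}$ be a closed set and $a \in A$ a point admitting an exterior unit normal. Then the exterior unit normal of $A$ at $a$ is unique: if both $u$ and $v$ in $\mathbf{S}^n$ are exterior normals of $A$ at $a$, then $u = v$. -/
open Set Metric Filter MeasureTheory
open scoped Topology ENNReal RealInnerProductSpace Pointwise

/-!
If `u ≠ v` are both exterior normals at `a`, the open wedge `⟪z - a, u⟫ < 0 < ⟪z - a, v⟫` is
nonempty. Inside `ball a r` it occupies a fixed positive fraction of `r ^ (n + 1)`, yet each of
its points lies either in `A` on the outer side of `v` or outside `A` on the inner side of `u`,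
and both of these have density zero at `a`.
-/

section Wedge

variable {E : Type*} [NormedAddCommGroup E] [InnerProductSpace ℝ E]

def wedge (u v : E) : Set E := {z | ⟪z, u⟫ < 0} ∩ {z | 0 < ⟪z, v⟫}

theorem isOpen_wedge (u v : E) : IsOpen (wedge u v) :=
  (isOpen_lt (continuous_id'.inner continuous_const) continuous_const).inter
    (isOpen_lt continuous_const (continuous_id'.inner continuous_const))

theorem smul_mem_wedge {u v z : E} {t : ℝ} (ht : 0 < t) (hz : z ∈ wedge u v) :
    t • z ∈ wedge u v := by
  simp only [wedge, mem_inter_iff, mem_ofPred_eq, real_inner_smul_left] at hz ⊢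
  exact ⟨mul_neg_of_pos_of_neg ht hz.1, mul_pos ht hz.2⟩

theorem smul_wedge (u v : E) {t : ℝ} (ht : 0 < t) : t • wedge u v = wedge u v := by
  refine smul_set_subset_iff.2 (fun z hz => smul_mem_wedge ht hz) |>.antisymm
    fun z hz => ?_
  rw [mem_smul_set_iff_inv_smul_mem₀ ht.ne']
  exact smul_mem_wedge (inv_pos.2 ht) hz

theorem sub_mem_wedge {u v : E} (hu : ‖u‖ = 1) (hv : ‖v‖ = 1) (huv : u ≠ v) :
    v - u ∈ wedge u v := by
  have hvu : ⟪v, u⟫ < 1 := (inner_lt_one_iff_real_of_norm_eq_one hv hu).2 huv.symm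
  have huu : ⟪u, u⟫ = 1 := by rw [real_inner_self_eq_norm_sq, hu, one_pow]
  have hvv : ⟪v, v⟫ = 1 := by rw [real_inner_self_eq_norm_sq, hv, one_pow]
  have huv' : ⟪u, v⟫ < 1 := real_inner_comm u v ▸ hvu
  simp only [wedge, mem_inter_iff, mem_ofPred_eq, inner_sub_left]
  constructor <;> linarith

theorem wedge_inter_ball_nonempty {u v : E} (hu : ‖u‖ = 1) (hv : ‖v‖ = 1) (huv : u ≠ v)
    {r : ℝ} (hr : 0 < r) : (wedge u v ∩ ball 0 r).Nonempty := by
  have hnorm : 0 < ‖v - u‖ := norm_pos_iff.2 (sub_ne_zero.2 huv.symm)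
  have ht : 0 < r / (2 * ‖v - u‖) := by positivity
  refine ⟨(r / (2 * ‖v - u‖)) • (v - u), smul_mem_wedge ht (sub_mem_wedge hu hv huv), ?_⟩
  rw [mem_ball_zero_iff, norm_smul, Real.norm_of_nonneg ht.le, div_mul_eq_mul_div,
    div_lt_iff₀ (by positivity)]
  nlinarith

theorem vadd_wedge_inter_ball (u v a : E) {r : ℝ} (hr : 0 < r) :
    (a +ᵥ wedge u v) ∩ ball a r = a +ᵥ r • (wedge u v ∩ ball 0 1) := by
  rw [smul_set_inter₀ hr.ne', smul_wedge u v hr, smul_unitBall_of_pos hr, vadd_set_inter,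
    vadd_ball_zero]

theorem vadd_wedge_inter_ball_subset (A : Set E) (u v a : E) (r : ℝ) :
    (a +ᵥ wedge u v) ∩ ball a r ⊆
      ({z | 0 < ⟪z - a, v⟫} ∩ ball a r ∩ A) ∪ (({z | ⟪z - a, u⟫ < 0} ∩ ball a r) \ A) := by
  rintro z ⟨hz, hzr⟩
  rw [mem_vadd_set_iff_neg_vadd_mem, vadd_eq_add, neg_add_eq_sub] at hz
  by_cases hzA : z ∈ A
  · exact Or.inl ⟨⟨hz.2, hzr⟩, hzA⟩
  · exact Or.inr ⟨⟨hz.1, hzr⟩, hzA⟩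

theorem measure_wedge_inter_ball_pos [MeasurableSpace E] (μ : Measure E) [μ.IsOpenPosMeasure]
    {u v : E} (hu : ‖u‖ = 1) (hv : ‖v‖ = 1) (huv : u ≠ v) {r : ℝ} (hr : 0 < r) :
    0 < μ (wedge u v ∩ ball 0 r) :=
  ((isOpen_wedge u v).inter isOpen_ball).measure_pos μ (wedge_inter_ball_nonempty hu hv huv hr)

theorem addHaar_vadd_wedge_inter_ball [MeasurableSpace E] [BorelSpace E] [FiniteDimensional ℝ E]
    (μ : Measure E) [μ.IsAddHaarMeasure] (u v a : E) {r : ℝ} (hr : 0 < r) :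
    μ ((a +ᵥ wedge u v) ∩ ball a r) =
      ENNReal.ofReal (r ^ Module.finrank ℝ E) * μ (wedge u v ∩ ball 0 1) := by
  rw [vadd_wedge_inter_ball u v a hr, measure_vadd, Measure.addHaar_smul_of_nonneg μ hr.le]

end Wedge

theorem exterior_normal_unique_general (n : ℕ)
    (A : Set (EuclideanSpace ℝ (Fin (n+1))))
    (a : EuclideanSpace ℝ (Fin (n+1)))
    (u v : EuclideanSpace ℝ (Fin (n+1))) (hu : ‖u‖ = 1) (hv : ‖v‖ = 1)
    (hu2 : Tendsto (fun r : ℝ =>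
        volume (({z : EuclideanSpace ℝ (Fin (n+1)) | ⟪z - a, u⟫ < 0} ∩ ball a r) \ A)
          / ENNReal.ofReal (r ^ (n+1))) (𝓝[>] 0) (𝓝 0))
    (hv1 : Tendsto (fun r : ℝ =>
        volume ({z : EuclideanSpace ℝ (Fin (n+1)) | 0 < ⟪z - a, v⟫} ∩ ball a r ∩ A)
          / ENNReal.ofReal (r ^ (n+1))) (𝓝[>] 0) (𝓝 0)) :
    u = v := by
  by_contra huv
  have hpos := measure_wedge_inter_ball_pos volume hu hv huv one_pos
  have hbound : ∀ r ∈ Ioi (0 : ℝ), volume (wedge u v ∩ ball 0 1) ≤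
      volume ({z | 0 < ⟪z - a, v⟫} ∩ ball a r ∩ A) / ENNReal.ofReal (r ^ (n+1)) +
        volume (({z | ⟪z - a, u⟫ < 0} ∩ ball a r) \ A) / ENNReal.ofReal (r ^ (n+1)) := by
    intro r (hr : 0 < r)
    have hr' : ENNReal.ofReal (r ^ (n+1)) ≠ 0 := by simpa using pow_pos hr (n+1)
    calc volume (wedge u v ∩ ball 0 1)
        = volume ((a +ᵥ wedge u v) ∩ ball a r) / ENNReal.ofReal (r ^ (n+1)) := by
          rw [addHaar_vadd_wedge_inter_ball volume u v a hr, finrank_euclideanSpace_fin,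
            mul_comm, ENNReal.mul_div_cancel_right hr' ENNReal.ofReal_ne_top]
      _ ≤ _ := by
          rw [← ENNReal.add_div]
          gcongr
          exact (measure_mono (vadd_wedge_inter_ball_subset A u v a r)).trans
            (measure_union_le _ _)
  have hle := ge_of_tendsto (by simpa using hv1.add hu2) (eventually_nhdsWithin_of_forall hbound)
  exact hpos.ne' (nonpos_iff_eq_zero.1 hle)

/-- Uniqueness of the exterior unit normal (in the Lebesgue density sense) of a
closed set at a point. -/
theorem exterior_normal_unique (n : ℕ)
    (A : Set (EuclideanSpace ℝ (Fin (n+1)))) (hA : IsClosed A)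
    (a : EuclideanSpace ℝ (Fin (n+1))) (ha : a ∈ A)
    (u v : EuclideanSpace ℝ (Fin (n+1))) (hu : ‖u‖ = 1) (hv : ‖v‖ = 1)
    (hu1 : Tendsto (fun r : ℝ =>
        volume ({z : EuclideanSpace ℝ (Fin (n+1)) | 0 < ⟪z - a, u⟫} ∩ ball a r ∩ A)
          / ENNReal.ofReal (r ^ (n+1))) (𝓝[>] 0) (𝓝 0))
    (hu2 : Tendsto (fun r : ℝ =>
        volume (({z : EuclideanSpace ℝ (Fin (n+1)) | ⟪z - a, u⟫ < 0} ∩ ball a r) \ A)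
          / ENNReal.ofReal (r ^ (n+1))) (𝓝[>] 0) (𝓝 0))
    (hv1 : Tendsto (fun r : ℝ =>
        volume ({z : EuclideanSpace ℝ (Fin (n+1)) | 0 < ⟪z - a, v⟫} ∩ ball a r ∩ A)
          / ENNReal.ofReal (r ^ (n+1))) (𝓝[>] 0) (𝓝 0))
    (hv2 : Tendsto (fun r : ℝ =>
        volume (({z : EuclideanSpace ℝ (Fin (n+1)) | ⟪z - a, v⟫ < 0} ∩ ball a r) \ A)
          / ENNReal.ofReal (r ^ (n+1))) (𝓝[>] 0) (𝓝 0)) :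
    u = v :=
  exterior_normal_unique_general n A a u v hu hv hu2 hv1
end
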